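/- arXiv:2602.16361 — 10 statements merged into one kernel-verified Lean document; each statement's English description precedes it below -/
import Mathlib

section
/- Let w ∈ W and i ∈ B be such that i is a right descent of w (ℓ(w * sᵢ) < ℓ(w)), set t := w * sᵢ * w⁻¹, and assume ℓ(t) + 1 = 2·ℓ(w). Then: (a) i is the unique right descent of w, i.e., for every j ∈ B, if ℓ(w * sⱼ) < ℓ(w) then j = i; and (b) for every reduced word ω of w (π ω = w and ω.length = ℓ(w)), the word ω ++ ω.dropLast.reverse is a reduced word for t, i.e., π (ω ++ ω.dropLast.reverse) = t and (ω ++ ω.dropLast.reverse).length = ℓ(t). -/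
namespace StmtAux0
open Real List CoxeterSystem
variable {B : Type*}

noncomputable def KK (M : CoxeterMatrix B) (a b : B) : ℝ := -Real.cos (Real.pi / M a b)
lemma KK_diag (M : CoxeterMatrix B) (a : B) : KK M a a = 1 := by simp [KK, M.diagonal a]
lemma KK_symm (M : CoxeterMatrix B) (a b : B) : KK M a b = KK M b a := by rw [KK, KK, M.symmetric]
noncomputable def LL (M : CoxeterMatrix B) (a : B) : (B →₀ ℝ) →ₗ[ℝ] ℝ :=
  Finsupp.linearCombination ℝ (KK M a)
lemma LL_single (M : CoxeterMatrix B) (a b : B) : LL M a (Finsupp.single b 1) = KK M a b := by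
  simp [LL]
noncomputable def grefl (M : CoxeterMatrix B) (a : B) : Module.End ℝ (B →₀ ℝ) :=
  LinearMap.id - (LL M a).smulRight ((2:ℝ) • Finsupp.single a 1)
lemma grefl_apply (M : CoxeterMatrix B) (a : B) (v : B →₀ ℝ) :
    grefl M a v = v - (2 * LL M a v) • Finsupp.single a 1 := by
  simp [grefl, LinearMap.smulRight_apply, smul_smul, mul_comm]
lemma grefl_fix (M : CoxeterMatrix B) (a : B) (v : B →₀ ℝ) (h : LL M a v = 0) :
    grefl M a v = v := by simp [grefl_apply, h]
lemma grefl_sq (M : CoxeterMatrix B) (a : B) (v : B →₀ ℝ) :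
    grefl M a (grefl M a v) = v := by
  have h1 : LL M a (Finsupp.single a (1:ℝ)) = 1 := by rw [LL_single, KK_diag]
  rw [grefl_apply, grefl_apply, map_sub, map_smul, h1, smul_eq_mul]
  have : (2 * (LL M a v - 2 * LL M a v * 1)) = -(2 * LL M a v) := by ring
  rw [this, neg_smul, sub_neg_eq_add, sub_add_cancel]

lemma sin_rec (c θ : ℝ) (hc : c = Real.cos θ) (x : ℝ) :
    Real.sin (x + 2*θ) = 2*c*Real.sin (x+θ) - Real.sin x := by
  have h1 : Real.sin ((x+θ)+θ) = Real.sin (x+θ) * Real.cos θ + Real.cos (x+θ) * Real.sin θ :=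
    Real.sin_add _ _
  have h2 : Real.sin ((x+θ)-θ) = Real.sin (x+θ) * Real.cos θ - Real.cos (x+θ) * Real.sin θ :=
    Real.sin_sub _ _
  rw [show (x+θ)+θ = x + 2*θ by ring] at h1
  rw [show (x+θ)-θ = x by ring] at h2
  rw [h1, h2, hc]; ring


lemma grefl_relation (M : CoxeterMatrix B) (a b : B) :
    ((grefl M a) * (grefl M b)) ^ (M a b) = 1 := by
  rcases eq_or_ne a b with rfl | hab
  · rw [M.diagonal, pow_one]
    refine LinearMap.ext fun v => ?_
    simpa [Module.End.mul_apply] using grefl_sq M a v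
  · rcases Nat.eq_zero_or_pos (M a b) with h0 | hpos
    · rw [h0, pow_zero]
    have hm2 : 2 ≤ M a b := by
      have := M.off_diagonal a b hab
      omega
    set m : ℕ := M a b with hm
    set θ : ℝ := Real.pi / m with hθ
    set c : ℝ := Real.cos θ with hc
    have hmR : (0:ℝ) < m := by exact_mod_cast hpos
    have hθpos : 0 < θ := div_pos Real.pi_pos hmR
    have hθlt : θ < Real.pi := by
      rw [hθ]
      apply div_lt_self Real.pi_pos
      exact_mod_cast (by omega : (1:ℕ) < m)
    have hsin : 0 < Real.sin θ := Real.sin_pos_of_pos_of_lt_pi hθpos hθlt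
    have hKab : KK M a b = -c := by rw [KK, hc, hθ, hm]
    have hKba : KK M b a = -c := by rw [← KK_symm, hKab]
    have hc2 : 1 - c^2 ≠ 0 := by
      have := Real.sin_sq_add_cos_sq θ
      nlinarith
    set ea : B →₀ ℝ := Finsupp.single a 1 with hea
    set eb : B →₀ ℝ := Finsupp.single b 1 with heb
    set A := grefl M a with hA
    set Bb := grefl M b with hB
    set P := A * Bb with hP
    have hLaa : LL M a ea = 1 := by rw [hea, LL_single, KK_diag]
    have hLbb : LL M b eb = 1 := by rw [heb, LL_single, KK_diag]
    have hLab : LL M a eb = -c := by rw [heb, LL_single, hKab]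
    have hLba : LL M b ea = -c := by rw [hea, LL_single, hKba]
    have hAea : A ea = -ea := by
      rw [hA, grefl_apply, hLaa]; module
    have hAeb : A eb = eb + (2*c) • ea := by
      rw [hA, grefl_apply, hLab]; module
    have hBeb : Bb eb = -eb := by
      rw [hB, grefl_apply, hLbb]; module
    have hBea : Bb ea = ea + (2*c) • eb := by
      rw [hB, grefl_apply, hLba]; module
    have hPea : P ea = (4*c^2-1) • ea + (2*c) • eb := by
      rw [hP, Module.End.mul_apply, hBea, map_add, map_smul, hAea, hAeb]; module
    have hPeb : P eb = (-(2*c)) • ea + (-1 : ℝ) • eb := by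
      rw [hP, Module.End.mul_apply, hBeb, map_neg, hAeb]; module
    set S : ℤ → ℝ := fun z => Real.sin (z * θ) with hS
    have hrec : ∀ z : ℤ, S (z+2) = 2*c*S (z+1) - S z := by
      intro z
      have := sin_rec c θ hc ((z:ℝ) * θ)
      rw [show (z:ℝ)*θ + 2*θ = ((z:ℝ)+2)*θ by ring, show (z:ℝ)*θ + θ = ((z:ℝ)+1)*θ by ring] at this
      simpa [hS] using this
    have hind : ∀ k : ℕ,
        (Real.sin θ) • ((P^k) ea) = S (2*k+1) • ea + S (2*k) • eb ∧
        (Real.sin θ) • ((P^k) eb) = (-S (2*k)) • ea + (-S (2*k-1)) • eb := by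
      intro k
      induction k with
      | zero =>
        have e0 : S 0 = 0 := by simp [hS]
        have e1 : S 1 = Real.sin θ := by simp [hS]
        have em1 : S (-1) = -Real.sin θ := by simp [hS]
        constructor
        · norm_num [e0, e1]
        · norm_num [e0, em1]
      | succ k ih =>
        obtain ⟨ih1, ih2⟩ := ih
        have h1 : S (2*k+2) = 2*c*S (2*k+1) - S (2*k) := hrec (2*k)
        have h2 : S (2*k+3) = 2*c*S (2*k+2) - S (2*k+1) := by
          have := hrec (2*k+1)
          rw [show (2*(k:ℤ)+1+2) = 2*k+3 by ring, show (2*(k:ℤ)+1+1) = 2*k+2 by ring] at this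
          exact this
        have h3 : S (2*k+1) = 2*c*S (2*k) - S (2*k-1) := by
          have := hrec (2*k-1)
          rw [show (2*(k:ℤ)-1+2) = 2*k+1 by ring, show (2*(k:ℤ)-1+1) = 2*k by ring] at this
          exact this
        have hp1 : (P^(k+1)) ea = P ((P^k) ea) := by
          rw [pow_succ']; rfl
        have hp2 : (P^(k+1)) eb = P ((P^k) eb) := by
          rw [pow_succ']; rfl
        constructor
        · rw [hp1, ← map_smul, ih1, map_add, map_smul, map_smul, hPea, hPeb]
          push_cast
          rw [show (2*((k:ℤ)+1)+1) = 2*k+3 by ring, show (2*((k:ℤ)+1)) = 2*k+2 by ring,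
            h2, h1]
          match_scalars <;> ring
        · rw [hp2, ← map_smul, ih2, map_add, map_smul, map_smul, hPea, hPeb]
          push_cast
          rw [show (2*((k:ℤ)+1)-1) = 2*k+1 by ring, show (2*((k:ℤ)+1)) = 2*k+2 by ring,
            h1, h3]
          match_scalars <;> ring
    have hS2m : S (2*m) = 0 := by
      have h : ((2*(m:ℤ) : ℤ) : ℝ) * θ = 2 * Real.pi := by
        rw [hθ]; push_cast; field_simp
      simp only [hS]
      rw [h, Real.sin_two_pi]
    have hS2m1 : S (2*m+1) = Real.sin θ := by
      have h : ((2*(m:ℤ)+1 : ℤ) : ℝ) * θ = θ + 2 * Real.pi := by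
        rw [hθ]; push_cast; field_simp; ring
      simp only [hS]
      rw [h, Real.sin_add_two_pi]
    have hS2m1' : S (2*m-1) = -Real.sin θ := by
      have h : ((2*(m:ℤ)-1 : ℤ) : ℝ) * θ = -θ + 2 * Real.pi := by
        rw [hθ]; push_cast; field_simp; ring
      simp only [hS]
      rw [h, Real.sin_add_two_pi, Real.sin_neg]
    have hPma : (P^m) ea = ea := by
      have := (hind m).1
      rw [hS2m1, hS2m] at this
      have h := smul_right_injective (B →₀ ℝ) (ne_of_gt hsin)
      apply h
      simpa using this
    have hPmb : (P^m) eb = eb := by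
      have := (hind m).2
      rw [hS2m1', hS2m] at this
      have h := smul_right_injective (B →₀ ℝ) (ne_of_gt hsin)
      apply h
      simp only [neg_zero, zero_smul, zero_add, neg_neg] at this
      simpa using this
    refine LinearMap.ext fun v => ?_
    rw [Module.End.one_apply]
    set α := LL M a v with hα
    set β := LL M b v with hβ
    set p : ℝ := (α + c*β)/(1-c^2) with hp'
    set q : ℝ := (β + c*α)/(1-c^2) with hq'
    set z : B →₀ ℝ := v - p • ea - q • eb with hz
    have hza : LL M a z = 0 := by
      simp only [hz, map_sub, map_smul, hLaa, hLab, smul_eq_mul]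
      rw [hp', hq']
      field_simp
      ring
    have hzb : LL M b z = 0 := by
      simp only [hz, map_sub, map_smul, hLbb, hLba, smul_eq_mul]
      rw [hp', hq']
      field_simp
      ring
    have hPz : ∀ k : ℕ, (P^k) z = z := by
      intro k
      induction k with
      | zero => simp
      | succ k ih =>
        have : (P^(k+1)) z = P ((P^k) z) := by rw [pow_succ']; rfl
        rw [this, ih, hP, Module.End.mul_apply, hB, grefl_fix M b z hzb, hA,
          grefl_fix M a z hza]
    have hvz : v = z + p • ea + q • eb := by rw [hz]; abel
    rw [hvz, map_add, map_add, map_smul, map_smul, hPz m, hPma, hPmb]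

variable {B : Type*} {W : Type*} [Group W] {M : CoxeterMatrix B} (cs : CoxeterSystem M W)


open Classical in
noncomputable def fsgn (i : B) : Function.End (W × ℤˣ) :=
  fun q => (cs.simple i * q.1 * cs.simple i, if q.1 = cs.simple i then -q.2 else q.2)

open Classical in
lemma fsgn_pow (a b : B) (k : ℕ) (x : W) (ε : ℤˣ) :
    ((fsgn cs a * fsgn cs b) ^ k) (x, ε) =
      ((cs.simple a * cs.simple b) ^ k * x * ((cs.simple a * cs.simple b) ^ k)⁻¹,
        ε * ∏ r ∈ Finset.range (2 * k),
          (if x = (cs.simple b * cs.simple a) ^ r * cs.simple b then (-1 : ℤˣ) else 1)) := by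
  induction k generalizing x ε with
  | zero =>
    rw [pow_zero]
    show (x, ε) = _
    simp
  | succ k ih =>
    set sa := cs.simple a
    set sb := cs.simple b
    have hmul : ∀ (f g : Function.End (W × ℤˣ)) (q : W × ℤˣ), (f * g) q = f (g q) :=
      fun _ _ _ => rfl
    have hpow : ((fsgn cs a * fsgn cs b) ^ (k+1)) (x, ε)
        = ((fsgn cs a * fsgn cs b) ^ k) ((fsgn cs a * fsgn cs b) (x, ε)) := by
      rw [pow_succ]; rfl
    have hc : (sb * x * sb = sa) ↔ (x = (sb * sa) ^ 1 * sb) := by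
      rw [pow_one]
      constructor
      · intro h
        rw [← h]
        simp [sa, sb, mul_assoc, cs.simple_mul_simple_cancel_left, cs.simple_mul_simple_self]
      · intro h
        rw [h]
        simp [sa, sb, mul_assoc, cs.simple_mul_simple_cancel_left, cs.simple_mul_simple_self]
    have hgx : (fsgn cs a * fsgn cs b) (x, ε) =
        ((sa * sb) * x * (sa * sb)⁻¹,
          ε * (if x = (sb * sa) ^ 0 * sb then (-1:ℤˣ) else 1)
            * (if x = (sb * sa) ^ 1 * sb then (-1:ℤˣ) else 1)) := by
      rw [hmul]
      simp only [fsgn]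
      rw [Prod.mk.injEq]
      constructor
      · rw [mul_inv_rev, cs.inv_simple, cs.inv_simple]
        simp only [sa, sb]
        group
      · simp only [sa, sb] at hc ⊢
        simp only [hc, pow_zero, one_mul]
        by_cases h1 : x = sb <;> by_cases h2 : x = (sb * sa) ^ 1 * sb <;>
          simp [h1, h2, pow_one]
    have hconj : ∀ r : ℕ, ((sa * sb) * x * (sa * sb)⁻¹ = (sb * sa) ^ r * sb)
        ↔ (x = (sb * sa) ^ (r + 2) * sb) := by
      intro r
      have hinv : (sa * sb)⁻¹ = sb * sa := by
        rw [mul_inv_rev, cs.inv_simple, cs.inv_simple]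
      rw [hinv]
      have key : (sb * sa) * ((sb * sa) ^ r * sb) * (sa * sb) = (sb * sa) ^ (r+2) * sb := by
        have h2 : ((sb * sa) : W) ^ (r+2) = (sb * sa) * ((sb * sa) ^ r * (sb * sa)) := by
          rw [pow_succ, pow_succ']
          group
        rw [h2]
        simp [mul_assoc]
      constructor
      · intro h
        rw [← key, ← h]
        simp [sa, sb, mul_assoc, cs.simple_mul_simple_cancel_left, cs.simple_mul_simple_self]
      · intro h
        rw [h, ← key]
        simp [sa, sb, mul_assoc, cs.simple_mul_simple_cancel_left, cs.simple_mul_simple_self]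
    rw [hpow, hgx, ih, Prod.mk.injEq]
    constructor
    · show (sa * sb) ^ k * ((sa*sb) * x * (sa*sb)⁻¹) * ((sa * sb) ^ k)⁻¹
          = (sa * sb) ^ (k+1) * x * ((sa * sb) ^ (k+1))⁻¹
      have hq : ∀ q : W, q ^ k * (q * x * q⁻¹) * (q ^ k)⁻¹ = q ^ (k+1) * x * (q ^ (k+1))⁻¹ := by
        intro q
        rw [pow_succ']
        group
      exact hq _
    · show (ε * (if x = (sb * sa) ^ 0 * sb then (-1:ℤˣ) else 1)
            * (if x = (sb * sa) ^ 1 * sb then (-1:ℤˣ) else 1))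
          * ∏ r ∈ Finset.range (2 * k),
              (if (sa*sb) * x * (sa*sb)⁻¹ = (sb * sa) ^ r * sb then (-1:ℤˣ) else 1)
          = ε * ∏ r ∈ Finset.range (2 * (k+1)),
              (if x = (sb * sa) ^ r * sb then (-1:ℤˣ) else 1)
      have hprod : (∏ r ∈ Finset.range (2 * k),
              (if (sa*sb) * x * (sa*sb)⁻¹ = (sb * sa) ^ r * sb then (-1:ℤˣ) else 1))
          = ∏ r ∈ Finset.range (2 * k),
              (if x = (sb * sa) ^ (r+1+1) * sb then (-1:ℤˣ) else 1) := by
        refine Finset.prod_congr rfl fun r _ => ?_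
        simp only [hconj r]
      rw [hprod, show 2 * (k+1) = (2*k+1)+1 by ring, Finset.prod_range_succ',
        Finset.prod_range_succ']
      simp only [pow_zero, pow_one, one_mul, zero_add]
      by_cases h1 : x = sb <;> by_cases h2 : x = sb * sa * sb <;>
        simp [h1, h2, mul_comm, mul_assoc, mul_left_comm]

open Classical in
lemma fsgn_liftable : M.IsLiftable (fsgn cs) := by
  intro a b
  funext q
  obtain ⟨x, ε⟩ := q
  show ((fsgn cs a * fsgn cs b) ^ M.M a b) (x, ε) = (x, ε)
  rw [fsgn_pow, cs.simple_mul_simple_pow a b, Prod.mk.injEq]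
  constructor
  · group
  · have hq : (cs.simple b * cs.simple a) ^ (M.M a b) = 1 := by
      have h := cs.simple_mul_simple_pow b a
      rwa [M.symmetric b a] at h
    rw [show 2 * M.M a b = M.M a b + M.M a b by ring, Finset.prod_range_add]
    have heq : ∀ r ∈ Finset.range (M.M a b),
        (if x = (cs.simple b * cs.simple a) ^ (M.M a b + r) * cs.simple b then (-1:ℤˣ) else 1)
        = (if x = (cs.simple b * cs.simple a) ^ r * cs.simple b then (-1:ℤˣ) else 1) := by
      intro r _
      rw [pow_add, hq, one_mul]
    rw [Finset.prod_congr rfl heq, Int.units_mul_self, mul_one]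

noncomputable def sgnRep : W →* Function.End (W × ℤˣ) :=
  cs.lift ⟨fsgn cs, fsgn_liftable cs⟩

lemma sgnRep_simple (i : B) : sgnRep cs (cs.simple i) = fsgn cs i :=
  cs.lift_apply_simple (fsgn_liftable cs) i

open Classical in
noncomputable def sgnw (ω : List B) (x : W) : ℤˣ :=
  ((cs.rightInvSeq ω).map (fun u => if x = u then (-1:ℤˣ) else 1)).prod

lemma sgnw_nil (x : W) : sgnw cs [] x = 1 := by simp [sgnw, rightInvSeq]

open Classical in
lemma sgnw_cons (a : B) (ω : List B) (x : W) :
    sgnw cs (a :: ω) x =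
      (if x = (cs.wordProd ω)⁻¹ * cs.simple a * cs.wordProd ω then (-1:ℤˣ) else 1)
        * sgnw cs ω x := by
  simp [sgnw, rightInvSeq]

open Classical in
lemma sgnRep_wordProd (ω : List B) (x : W) (ε : ℤˣ) :
    sgnRep cs (cs.wordProd ω) (x, ε) =
      (cs.wordProd ω * x * (cs.wordProd ω)⁻¹, ε * sgnw cs ω x) := by
  induction ω generalizing x ε with
  | nil =>
    rw [cs.wordProd_nil, map_one, sgnw_nil]
    show (x, ε) = _
    simp
  | cons a ω ih =>
    rw [cs.wordProd_cons, map_mul]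
    have hstep : (sgnRep cs (cs.simple a) * sgnRep cs (cs.wordProd ω)) (x, ε)
        = sgnRep cs (cs.simple a) (sgnRep cs (cs.wordProd ω) (x, ε)) := rfl
    rw [hstep, ih, sgnRep_simple]
    set sa := cs.simple a
    set pw := cs.wordProd ω
    show (sa * (pw * x * pw⁻¹) * sa, if pw * x * pw⁻¹ = sa then -(ε * sgnw cs ω x) else ε * sgnw cs ω x)
        = (sa * pw * x * (sa * pw)⁻¹, ε * sgnw cs (a :: ω) x)
    have hcond : (pw * x * pw⁻¹ = sa) ↔ (x = pw⁻¹ * sa * pw) := by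
      constructor
      · intro h
        rw [← h]
        group
      · intro h
        rw [h]
        group
    rw [Prod.mk.injEq]
    constructor
    · rw [mul_inv_rev, cs.inv_simple]
      group
      rfl
    · rw [sgnw_cons]
      simp only [hcond]
      by_cases h1 : x = pw⁻¹ * sa * pw <;> simp [h1]
      · rfl
      · exact h1

noncomputable def nsgn (w x : W) : ℤˣ := (sgnRep cs w (x, 1)).2

lemma nsgn_eq_sgnw (ω : List B) (x : W) : nsgn cs (cs.wordProd ω) x = sgnw cs ω x := by
  rw [nsgn, sgnRep_wordProd, one_mul]

lemma sgnRep_apply (w x : W) (ε : ℤˣ) :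
    sgnRep cs w (x, ε) = (w * x * w⁻¹, ε * nsgn cs w x) := by
  obtain ⟨ω, -, rfl⟩ := cs.exists_reduced_word w
  rw [sgnRep_wordProd, nsgn_eq_sgnw]

lemma nsgn_mul (u v x : W) : nsgn cs (u * v) x = nsgn cs v x * nsgn cs u (v * x * v⁻¹) := by
  have h1 : sgnRep cs (u * v) (x, 1) = (sgnRep cs u) ((sgnRep cs v) (x, 1)) := by
    rw [map_mul]; rfl
  rw [sgnRep_apply, sgnRep_apply, sgnRep_apply] at h1
  have := congrArg Prod.snd h1
  simpa using this

open Classical in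
lemma nsgn_simple_self (i : B) : nsgn cs (cs.simple i) (cs.simple i) = -1 := by
  rw [nsgn, sgnRep_simple]
  show (if cs.simple i = cs.simple i then -(1:ℤˣ) else 1) = -1
  simp

lemma nsgn_refl_self (x : W) (hx : cs.IsReflection x) : nsgn cs x x = -1 := by
  obtain ⟨u, i, rfl⟩ := hx
  have h2 : u⁻¹ * (u * cs.simple i * u⁻¹) * u⁻¹⁻¹ = cs.simple i := by group
  have h4 : cs.simple i * cs.simple i * (cs.simple i)⁻¹ = cs.simple i := by group
  have h1 : nsgn cs ((u * cs.simple i) * u⁻¹) (u * cs.simple i * u⁻¹)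
      = nsgn cs u⁻¹ (u * cs.simple i * u⁻¹)
        * nsgn cs (u * cs.simple i) (u⁻¹ * (u * cs.simple i * u⁻¹) * u⁻¹⁻¹) :=
    nsgn_mul cs _ _ _
  rw [h2] at h1
  have h3 : nsgn cs (u * cs.simple i) (cs.simple i)
      = nsgn cs (cs.simple i) (cs.simple i)
        * nsgn cs u (cs.simple i * cs.simple i * (cs.simple i)⁻¹) := nsgn_mul cs _ _ _
  rw [h4, nsgn_simple_self] at h3
  have h6 : nsgn cs (u⁻¹ * u) (cs.simple i)
      = nsgn cs u (cs.simple i) * nsgn cs u⁻¹ (u * cs.simple i * u⁻¹) := nsgn_mul cs _ _ _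
  rw [inv_mul_cancel] at h6
  have h7 : nsgn cs (1 : W) (cs.simple i) = 1 := by
    rw [nsgn, map_one]
    rfl
  rw [h7] at h6
  have hgoal : nsgn cs (u * cs.simple i * u⁻¹) (u * cs.simple i * u⁻¹)
      = nsgn cs ((u * cs.simple i) * u⁻¹) (u * cs.simple i * u⁻¹) := rfl
  rw [hgoal, h1, h3]
  calc nsgn cs u⁻¹ (u * cs.simple i * u⁻¹) * (-1 * nsgn cs u (cs.simple i))
      = -(nsgn cs u (cs.simple i) * nsgn cs u⁻¹ (u * cs.simple i * u⁻¹)) := by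
        rw [neg_one_mul, mul_neg, mul_comm]
    _ = -1 := by
        rw [show nsgn cs u (cs.simple i) * nsgn cs u⁻¹ (u * cs.simple i * u⁻¹) = 1 from h6.symm]



variable {W : Type*} [Group W] {M : CoxeterMatrix B}

lemma simple_injective (cs : CoxeterSystem M W) : Function.Injective cs.simple := by
  intro i j hij
  by_contra hne
  have hlift : M.IsLiftable (fun a => grefl M a) := fun a b => grefl_relation M a b
  have h1 : cs.lift ⟨_, hlift⟩ (cs.simple i) = grefl M i := cs.lift_apply_simple hlift i
  have h2 : cs.lift ⟨_, hlift⟩ (cs.simple j) = grefl M j := cs.lift_apply_simple hlift j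
  rw [hij, h2] at h1
  have hev := congrArg (fun (f : Module.End ℝ (B →₀ ℝ)) => f (Finsupp.single i 1)) h1
  simp only [grefl_apply, LL_single, KK_diag] at hev
  have hcoord := congrArg (fun v : B →₀ ℝ => v i) hev
  simp [Finsupp.single_apply, hne, Ne.symm hne] at hcoord
  linarith

variable (cs : CoxeterSystem M W)

open Classical in
lemma mem_ris_of_nsgn_neg (ω : List B) (x : W) (h : nsgn cs (cs.wordProd ω) x = -1) :
    x ∈ cs.rightInvSeq ω := by
  by_contra hmem
  rw [nsgn_eq_sgnw] at h
  have hone : sgnw cs ω x = 1 := by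
    apply List.prod_eq_one
    intro y hy
    obtain ⟨u, hu, rfl⟩ := List.mem_map.mp hy
    rw [if_neg]
    intro he
    exact hmem (he ▸ hu)
  rw [hone] at h
  exact absurd h (by decide)

lemma length_lt_of_nsgn_neg (w x : W) (h : nsgn cs w x = -1) :
    cs.length (w * x) < cs.length w := by
  obtain ⟨ω, hl, hw⟩ := cs.exists_reduced_word w
  subst hw
  have hred : cs.IsReduced ω := hl
  have hmem := mem_ris_of_nsgn_neg cs ω x h
  exact (cs.isRightInversion_of_mem_rightInvSeq hred hmem).2

lemma mem_ris_of_inversion (w x : W) (hx : cs.IsReflection x)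
    (hlt : cs.length (w * x) < cs.length w)
    (ω : List B) (hω : cs.wordProd ω = w) : x ∈ cs.rightInvSeq ω := by
  apply mem_ris_of_nsgn_neg
  rw [hω]
  rcases Int.units_eq_one_or (nsgn cs w x) with h1 | h1
  · exfalso
    have h2 : nsgn cs ((w * x) * x) x = nsgn cs x x * nsgn cs (w * x) (x * x * x⁻¹) :=
      nsgn_mul cs _ _ _
    have h3 : x * x * x⁻¹ = x := by group
    have h4 : (w * x) * x = w := by rw [mul_assoc, hx.mul_self, mul_one]
    rw [h3, nsgn_refl_self cs x hx, h4, h1] at h2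
    have h5 : nsgn cs (w * x) x = -1 := by
      rcases Int.units_eq_one_or (nsgn cs (w * x) x) with h6 | h6
      · rw [h6] at h2
        exact absurd h2 (by decide)
      · exact h6
    have h7 := length_lt_of_nsgn_neg cs (w * x) x h5
    rw [h4] at h7
    omega
  · exact h1

end StmtAux0

/-- If `i` is a right descent of `w`, `t = w * sᵢ * w⁻¹` and
`ℓ(t) + 1 = 2ℓ(w)`, then `i` is the unique right descent of `w`, and for every
reduced word `ω` of `w`, the palindromic word `ω ++ ω.dropLast.reverse` is a
reduced word for `t`. -/
theorem stmt_0 {B : Type*} {W : Type*} [Group W] {M : CoxeterMatrix B}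
    (cs : CoxeterSystem M W) (w : W) (i : B)
    (hdesc : cs.IsRightDescent w i)
    (t : W) (ht : t = w * cs.simple i * w⁻¹)
    (hlen : cs.length t + 1 = 2 * cs.length w) :
    (∀ j : B, cs.IsRightDescent w j → j = i) ∧
    (∀ ω : List B, cs.wordProd ω = w → ω.length = cs.length w →
      cs.wordProd (ω ++ ω.dropLast.reverse) = t ∧
      (ω ++ ω.dropLast.reverse).length = cs.length t) := by
  classical
  have hsi : cs.IsReflection (cs.simple i) := cs.isReflection_simple i
  have hlen_wsi : cs.length (w * cs.simple i) + 1 = cs.length w := cs.isRightDescent_iff.mp hdesc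
  have key : ∀ j : B, cs.IsRightDescent w j → cs.simple j = cs.simple i := by
    intro j hj
    by_contra hss
    have hvlen : cs.length (w * cs.simple j) + 1 = cs.length w := cs.isRightDescent_iff.mp hj
    obtain ⟨ω', hl', hp'⟩ := cs.exists_reduced_word (w * cs.simple j)
    have hred' : cs.IsReduced ω' := by
      show cs.length (cs.wordProd ω') = ω'.length
      rw [← hp', hp']
      exact hl'
    have hπψ : cs.wordProd (ω'.concat j) = w := by
      rw [cs.wordProd_concat, ← hp', mul_assoc, cs.simple_mul_simple_self, mul_one]
    have hmem : cs.simple i ∈ cs.rightInvSeq (ω'.concat j) :=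
      StmtAux0.mem_ris_of_inversion cs w (cs.simple i) hsi hdesc _ hπψ
    rw [cs.rightInvSeq_concat, List.concat_eq_append, List.mem_append] at hmem
    rcases hmem with hmem | hmem
    · obtain ⟨u, hu, huc⟩ := List.mem_map.mp hmem
      rw [MulAut.conj_apply, cs.inv_simple] at huc
      have hinv := (cs.isRightInversion_of_mem_rightInvSeq hred' hu).2
      have hu_eq : u = cs.simple j * cs.simple i * cs.simple j := by
        rw [← huc]
        simp [mul_assoc, cs.simple_mul_simple_cancel_left, cs.simple_mul_simple_self]
      have hprod_eq : cs.wordProd ω' * u = w * cs.simple i * cs.simple j := by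
        rw [← hp', hu_eq]
        simp [mul_assoc, cs.simple_mul_simple_cancel_left]
      rw [hprod_eq, ← hp'] at hinv
      have htri : cs.length t ≤
          cs.length (w * cs.simple i * cs.simple j) + cs.length (w * cs.simple j) := by
        have hteq : t = (w * cs.simple i * cs.simple j) * (w * cs.simple j)⁻¹ := by
          rw [ht]
          group
        rw [hteq]
        have h := cs.length_mul_le (w * cs.simple i * cs.simple j) ((w * cs.simple j)⁻¹)
        rwa [cs.length_inv] at h
      omega
    · rw [List.mem_singleton] at hmem
      exact hss hmem.symm
  have parta : ∀ j : B, cs.IsRightDescent w j → j = i :=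
    fun j hj => StmtAux0.simple_injective cs (key j hj)
  refine ⟨parta, ?_⟩
  intro ω hπ hl
  have hdesc' : cs.length (w * cs.simple i) < cs.length w := hdesc
  have hwpos : 0 < cs.length w := by omega
  have hne : ω ≠ [] := by
    intro h
    rw [h] at hl
    simp at hl
    omega
  obtain ⟨ω₀, k, hsplit⟩ : ∃ ω₀ kk, ω = ω₀ ++ [kk] :=
    ⟨ω.dropLast, ω.getLast hne, (List.dropLast_append_getLast hne).symm⟩
  have hdrop : ω.dropLast = ω₀ := by
    rw [hsplit]
    simp
  have hπ0 : cs.wordProd ω = cs.wordProd ω₀ * cs.simple k := by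
    rw [hsplit, ← List.concat_eq_append, cs.wordProd_concat]
  have hwsk : w * cs.simple k = cs.wordProd ω₀ := by
    rw [← hπ, hπ0, mul_assoc, cs.simple_mul_simple_self, mul_one]
  have hlenlist : ω.length = ω₀.length + 1 := by
    rw [hsplit]
    simp
  have hlen0 : cs.IsRightDescent w k := by
    show cs.length (w * cs.simple k) < cs.length w
    rw [hwsk]
    have h1 : cs.length (cs.wordProd ω₀) ≤ ω₀.length := cs.length_wordProd_le ω₀
    omega
  have hk : k = i := parta k hlen0
  subst hk
  constructor
  · rw [cs.wordProd_append, cs.wordProd_reverse, hdrop, hπ, ← hwsk, ht]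
    rw [mul_inv_rev, cs.inv_simple]
    group
  · rw [List.length_append, List.length_reverse, hdrop]
    omega
end

section
/- Let σ : List B and r ∈ B be such that σ ++ [r] is reduced; set w := π (σ ++ [r]) and t := w * s_r * w⁻¹. Then ℓ(t) + 1 = 2·ℓ(w) holds if and only if the palindromic word σ ++ [r] ++ σ.reverse is reduced. Moreover, in that case t is a left inversion of w, i.e., ℓ(t * w) < ℓ(w). -/
/-!
Conjugating `s_r` by `w = π (σ ++ [r])` gives the same reflection `t` as conjugating by `π σ`, and
the palindrome `σ ++ [r] ++ σ.reverse` is a word of length `2|σ| + 1 = 2ℓ(w) - 1` for `t`, so it is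
reduced exactly when `ℓ(t) + 1 = 2ℓ(w)`. Moreover `t` is the last entry of the left inversion
sequence of the reduced word `σ ++ [r]`, hence always a left inversion of `w`.
-/

namespace CoxeterSystem

variable {B W : Type*} [Group W] {M : CoxeterMatrix B} (cs : CoxeterSystem M W)

theorem wordProd_concat_conj_simple (σ : List B) (r : B) :
    cs.wordProd (σ ++ [r]) * cs.simple r * (cs.wordProd (σ ++ [r]))⁻¹ =
      cs.wordProd σ * cs.simple r * (cs.wordProd σ)⁻¹ := by
  rw [wordProd_append, wordProd_singleton, mul_inv_rev, inv_simple,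
    simple_mul_simple_cancel_right, mul_assoc]

theorem wordProd_palindrome (σ : List B) (r : B) :
    cs.wordProd (σ ++ [r] ++ σ.reverse) = cs.wordProd σ * cs.simple r * (cs.wordProd σ)⁻¹ := by
  rw [wordProd_append, wordProd_append, wordProd_singleton, wordProd_reverse]

theorem isReduced_palindrome_iff (σ : List B) (r : B) :
    cs.IsReduced (σ ++ [r] ++ σ.reverse) ↔
      cs.length (cs.wordProd σ * cs.simple r * (cs.wordProd σ)⁻¹) = 2 * σ.length + 1 := by
  rw [IsReduced, wordProd_palindrome]
  simp only [List.length_append, List.length_singleton, List.length_reverse]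
  omega

theorem isLeftInversion_conj_simple_of_isReduced {σ : List B} {r : B}
    (hred : cs.IsReduced (σ ++ [r])) :
    cs.IsLeftInversion (cs.wordProd (σ ++ [r])) (cs.wordProd σ * cs.simple r * (cs.wordProd σ)⁻¹) :=
  cs.isLeftInversion_of_mem_leftInvSeq hred <| by
    rw [← List.concat_eq_append, leftInvSeq_concat, List.concat_eq_append]
    exact List.mem_concat_self

end CoxeterSystem

/-- Let `σ ++ [r]` be reduced, `w := π (σ ++ [r])` and
`t := w * s_r * w⁻¹`. Then `ℓ(t) + 1 = 2ℓ(w)` iff the palindromic word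
`σ ++ [r] ++ σ.reverse` is reduced; and in that case `t` is a left inversion
of `w`. -/
theorem stmt_1 {B : Type*} {W : Type*} [Group W] {M : CoxeterMatrix B}
    (cs : CoxeterSystem M W) (σ : List B) (r : B)
    (hred : cs.IsReduced (σ ++ [r]))
    (w t : W) (hw : w = cs.wordProd (σ ++ [r]))
    (ht : t = w * cs.simple r * w⁻¹) :
    (cs.length t + 1 = 2 * cs.length w ↔ cs.IsReduced (σ ++ [r] ++ σ.reverse)) ∧
    (cs.length t + 1 = 2 * cs.length w → cs.IsLeftInversion w t) := by
  subst hw ht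
  have hlen : cs.length (cs.wordProd (σ ++ [r])) = σ.length + 1 := by
    simpa using hred.eq
  rw [cs.wordProd_concat_conj_simple, cs.isReduced_palindrome_iff, hlen]
  exact ⟨by omega, fun _ => cs.isLeftInversion_conj_simple_of_isReduced hred⟩
end

section
/- Let σ : List B and r ∈ B, and set t := π (σ ++ [r] ++ σ.reverse). The following are equivalent: (i) for every j with 0 ≤ j ≤ σ.length, the word (σ.drop j) ++ [r] ++ (σ.drop j).reverse is reduced; (ii) the word σ ++ [r] ++ σ.reverse is reduced; (iii) σ ++ [r] is reduced and p := π (σ ++ [r]) is a t-prefix, i.e., ℓ(p) + ℓ(p⁻¹ * t) = ℓ(t) and 2·ℓ(p) = ℓ(t) + 1. (This is the correspondence between reduced words of reflection-prefixes and saturated chains in the root poset, expressed group-theoretically via the dictionary dp(α_u) = (ℓ(u) − 1)/2 for reflections u.) -/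
/-! Contiguous subwords of reduced words are reduced, which gives (i) ⇔ (ii). Writing
`p = π (σ ++ [r])`, we have `p⁻¹ * t = π σ.reverse`, and `ℓ` is additive along the reduced
word `σ ++ [r] ++ σ.reverse`, which gives (ii) ⇒ (iii); conversely, once `σ ++ [r]` is
reduced, `2 * ℓ p = ℓ t + 1` says exactly that `ℓ t = 2 * σ.length + 1`. -/

namespace CoxeterSystem

variable {B W : Type*} [Group W] {M : CoxeterMatrix B} {cs : CoxeterSystem M W}

theorem IsReduced.of_infix {ω ω' : List B} (hω' : cs.IsReduced ω') (h : ω <:+: ω') :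
    cs.IsReduced ω := by
  obtain ⟨a, c, rfl⟩ := h
  have h := (hω'.take (a ++ ω).length).drop a.length
  rwa [List.take_append_length, List.drop_append_length] at h

theorem IsReduced.length_wordProd_append {ω₁ ω₂ : List B} (h : cs.IsReduced (ω₁ ++ ω₂)) :
    cs.length (cs.wordProd ω₁) + cs.length (cs.wordProd ω₂) =
      cs.length (cs.wordProd (ω₁ ++ ω₂)) := by
  have h₁ : cs.IsReduced ω₁ := h.of_infix (List.infix_append' [] ω₁ ω₂)
  have h₂ : cs.IsReduced ω₂ := h.of_infix (List.suffix_append ω₁ ω₂).isInfix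
  rw [h₁.eq, h₂.eq, h.eq, List.length_append]

theorem isReduced_iff_length_wordProd_ge (ω : List B) :
    cs.IsReduced ω ↔ ω.length ≤ cs.length (cs.wordProd ω) :=
  ⟨fun h => h.ge, fun h => le_antisymm (cs.length_wordProd_le ω) h⟩

end CoxeterSystem

open CoxeterSystem

/-- Correspondence between reduced words of reflection-prefixes
and saturated chains in the root poset. -/
theorem stmt_3 {B : Type*} {W : Type*} [Group W] {M : CoxeterMatrix B}
    (cs : CoxeterSystem M W) (σ : List B) (r : B)
    (t : W) (ht : t = cs.wordProd (σ ++ [r] ++ σ.reverse)) :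
    ((∀ j : ℕ, j ≤ σ.length →
        cs.IsReduced (σ.drop j ++ [r] ++ (σ.drop j).reverse)) ↔
      cs.IsReduced (σ ++ [r] ++ σ.reverse)) ∧
    (cs.IsReduced (σ ++ [r] ++ σ.reverse) ↔
      (cs.IsReduced (σ ++ [r]) ∧
        cs.length (cs.wordProd (σ ++ [r])) +
          cs.length ((cs.wordProd (σ ++ [r]))⁻¹ * t) = cs.length t ∧
        2 * cs.length (cs.wordProd (σ ++ [r])) = cs.length t + 1)) := by
  have hdrop_infix (j : ℕ) :
      σ.drop j ++ [r] ++ (σ.drop j).reverse <:+: σ ++ [r] ++ σ.reverse := by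
    refine ⟨σ.take j, (σ.take j).reverse, ?_⟩
    conv_rhs => rw [← List.take_append_drop j σ]
    simp only [List.reverse_append, List.append_assoc]
  refine ⟨⟨fun h => by simpa using h 0 (Nat.zero_le _), fun h j _ => h.of_infix (hdrop_infix j)⟩,
    ⟨fun h => ?_, fun ⟨hprefix, _, hhalf⟩ => ?_⟩⟩
  · have hprefix : cs.IsReduced (σ ++ [r]) := h.of_infix (List.infix_append' [] _ _)
    have hcomplement : (cs.wordProd (σ ++ [r]))⁻¹ * t = cs.wordProd σ.reverse := by
      rw [ht, cs.wordProd_append (σ ++ [r]), inv_mul_cancel_left]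
    have hsplit := h.length_wordProd_append
    rw [← hcomplement, ← ht] at hsplit
    refine ⟨hprefix, hsplit, ?_⟩
    have hlen := h.eq
    have hprefix_len := hprefix.eq
    rw [← ht] at hlen
    simp only [List.length_append, List.length_singleton, List.length_reverse] at hlen hprefix_len
    omega
  · rw [isReduced_iff_length_wordProd_ge, ← ht]
    have hprefix_len := hprefix.eq
    simp only [List.length_append, List.length_singleton, List.length_reverse] at hprefix_len ⊢
    omega
end

section
/- Let σ : List B and r ∈ B be such that σ ++ [r] ++ σ.reverse is reduced, and set t := π (σ ++ [r] ++ σ.reverse). Then for every j with 0 ≤ j ≤ σ.length, letting t' := π ((σ.drop j) ++ [r] ++ (σ.drop j).reverse), there exists v ∈ W such that t = v * t' * v⁻¹, ℓ(t) = ℓ(t') + 2·ℓ(v), and ℓ(v * t') > ℓ(v). (This expresses, group-theoretically, that the positive root of the reflection t' lies below the positive root of t in the root poset: the condition ℓ(v * t') > ℓ(v) encodes that v maps the root of t' to a positive root, and ℓ(t) = ℓ(t') + 2·ℓ(v) encodes ℓ(v) = dp(α_t) − dp(α_{t'}).) -/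
/-- If `σ ++ [r] ++ σ.reverse` is reduced with product `t`, then
for every `j ≤ σ.length`, letting `t' := π ((σ.drop j) ++ [r] ++ (σ.drop j).reverse)`,
there exists `v` with `t = v * t' * v⁻¹`, `ℓ(t) = ℓ(t') + 2ℓ(v)` and
`ℓ(v * t') > ℓ(v)`. -/
theorem stmt_4 {B : Type*} {W : Type*} [Group W] {M : CoxeterMatrix B}
    (cs : CoxeterSystem M W) (σ : List B) (r : B)
    (hred : cs.IsReduced (σ ++ [r] ++ σ.reverse))
    (t : W) (ht : t = cs.wordProd (σ ++ [r] ++ σ.reverse))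
    (j : ℕ) (hj : j ≤ σ.length)
    (t' : W) (ht' : t' = cs.wordProd (σ.drop j ++ [r] ++ (σ.drop j).reverse)) :
    ∃ v : W, t = v * t' * v⁻¹ ∧
      cs.length t = cs.length t' + 2 * cs.length v ∧
      cs.length v < cs.length (v * t') := by
  set n := σ.length with hn
  have hσ : σ = σ.take j ++ σ.drop j := (List.take_append_drop j σ).symm
  have hsplit : σ ++ [r] ++ σ.reverse
      = σ.take j ++ ((σ.drop j ++ [r] ++ (σ.drop j).reverse) ++ (σ.take j).reverse) := by
    conv_lhs => rw [hσ]
    simp only [List.append_assoc, List.reverse_append, List.cons_append,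
      List.singleton_append, List.nil_append]
  have hlen_take : (σ.take j).length = j := by
    simp [hn, hj]; omega
  have hlen_mid : (σ.drop j ++ [r] ++ (σ.drop j).reverse).length = (n - j) + 1 + (n - j) := by
    simp [hn]; omega
  -- the middle word is reduced
  have hmid : cs.IsReduced (σ.drop j ++ [r] ++ (σ.drop j).reverse) := by
    have h := CoxeterSystem.IsReduced.take (CoxeterSystem.IsReduced.drop hred j) ((n - j) + 1 + (n - j))
    rwa [hsplit, List.drop_left' hlen_take, List.take_left' hlen_mid] at h
  -- the initial segment is reduced
  have htake : cs.IsReduced (σ.take j) := by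
    have h := CoxeterSystem.IsReduced.take hred j
    rwa [List.append_assoc, List.take_append_of_le_length hj] at h
  have h3 : cs.length (cs.wordProd (σ.take j)) = j := by
    rw [htake, hlen_take]
  refine ⟨cs.wordProd (σ.take j), ?_, ?_, ?_⟩
  · rw [ht, ht', hsplit]
    simp only [CoxeterSystem.wordProd_append, CoxeterSystem.wordProd_reverse]
    group
  · have h1 : cs.length t = n + 1 + n := by
      rw [ht, hred]; simp only [List.length_append, List.length_reverse,
        List.length_singleton]
      try omega
    have h2 : cs.length t' = (n - j) + 1 + (n - j) := by
      rw [ht', hmid, hlen_mid]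
    rw [h1, h2, h3]; omega
  · have hprefeq : cs.wordProd (σ.take j) * t'
        = cs.wordProd (σ ++ [r] ++ (σ.drop j).reverse) := by
      rw [ht', ← CoxeterSystem.wordProd_append]
      congr 1
      rw [← List.append_assoc, ← List.append_assoc, List.take_append_drop,
        List.append_assoc]
    have hpref : cs.IsReduced (σ ++ [r] ++ (σ.drop j).reverse) := by
      have h := CoxeterSystem.IsReduced.take hred ((n + 1) + (n - j))
      have heq : (σ ++ [r] ++ σ.reverse).take ((n + 1) + (n - j))
          = σ ++ [r] ++ (σ.drop j).reverse := by
        rw [List.take_append, List.take_of_length_le (by simp only [List.length_append, List.length_singleton]; omega)]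
        simp only [List.length_append, List.length_singleton]
        rw [show n + 1 + (n - j) - (σ.length + 1) = n - j from by omega,
          List.take_reverse, show σ.length - (n - j) = j from by omega]
      rwa [heq] at h
    rw [hprefeq, hpref, h3]
    simp only [List.length_append, List.length_reverse, List.length_drop,
      List.length_singleton]
    omega
end

section
/- Let r, t ∈ W be distinct reflections and let W' := Subgroup.closure {r, t} be the dihedral reflection subgroup they generate. Let p_r be an r-prefix and p_t a t-prefix. Suppose that r is the only reflection lying in W' that is a left inversion of p_r, and that t is the only reflection lying in W' that is a left inversion of p_t. Then the set of canonical generators χ(W') := {u ∈ W | u ∈ W', u is a reflection, and every reflection v ∈ W' that is a left inversion of u equals u} is exactly {r, t}. -/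
namespace StmtAux

open CoxeterSystem List

attribute [local instance] Classical.propDecidable

variable {B : Type*} {W : Type*} [Group W] {M : CoxeterMatrix B} (cs : CoxeterSystem M W)

noncomputable def permAux (i : B) : Equiv.Perm (W × ℤˣ) where
  toFun q := (cs.simple i * q.1 * cs.simple i, if q.1 = cs.simple i then -q.2 else q.2)
  invFun q := (cs.simple i * q.1 * cs.simple i, if q.1 = cs.simple i then -q.2 else q.2)
  left_inv := by
    rintro ⟨x, ε⟩
    have h1 : cs.simple i * (cs.simple i * x * cs.simple i) * cs.simple i = x := by
      simp [mul_assoc, cs.simple_mul_simple_cancel_left, cs.simple_mul_simple_cancel_right]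
    have h2 : (cs.simple i * x * cs.simple i = cs.simple i) ↔ x = cs.simple i := by
      constructor
      · intro h
        have h' := congrArg (fun z => cs.simple i * z * cs.simple i) h
        simp only [h1] at h'
        simpa [cs.simple_mul_simple_cancel_right] using h'
      · rintro rfl; simp [cs.simple_mul_simple_cancel_right]
    by_cases h : x = cs.simple i <;> simp [h, h1, h2]
  right_inv := by
    rintro ⟨x, ε⟩
    have h1 : cs.simple i * (cs.simple i * x * cs.simple i) * cs.simple i = x := by
      simp [mul_assoc, cs.simple_mul_simple_cancel_left, cs.simple_mul_simple_cancel_right]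
    have h2 : (cs.simple i * x * cs.simple i = cs.simple i) ↔ x = cs.simple i := by
      constructor
      · intro h
        have h' := congrArg (fun z => cs.simple i * z * cs.simple i) h
        simp only [h1] at h'
        simpa [cs.simple_mul_simple_cancel_right] using h'
      · rintro rfl; simp [cs.simple_mul_simple_cancel_right]
    by_cases h : x = cs.simple i <;> simp [h, h1, h2]

theorem permAux_apply (i : B) (x : W) (ε : ℤˣ) :
    permAux cs i (x, ε) = (cs.simple i * x * cs.simple i, if x = cs.simple i then -ε else ε) :=
  rfl

noncomputable def permProd (ω : List B) : Equiv.Perm (W × ℤˣ) := (ω.map (permAux cs)).prod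

theorem permProd_nil : permProd cs [] = 1 := rfl

theorem permProd_cons (i : B) (ω : List B) :
    permProd cs (i :: ω) = permAux cs i * permProd cs ω := by
  simp [permProd]

theorem permProd_apply (ω : List B) (x : W) (ε : ℤˣ) :
    permProd cs ω (x, ε) =
      (cs.wordProd ω * x * (cs.wordProd ω)⁻¹,
        (-1 : ℤˣ) ^ ((cs.rightInvSeq ω).count x) * ε) := by
  induction ω with
  | nil => simp [permProd_nil, rightInvSeq]
  | cons i ω ih =>
    rw [permProd_cons, Equiv.Perm.mul_apply, ih, permAux_apply]
    have hris : cs.rightInvSeq (i :: ω) =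
        ((cs.wordProd ω)⁻¹ * cs.simple i * cs.wordProd ω) :: cs.rightInvSeq ω := rfl
    have hcond : (cs.wordProd ω * x * (cs.wordProd ω)⁻¹ = cs.simple i) ↔
        ((cs.wordProd ω)⁻¹ * cs.simple i * cs.wordProd ω = x) := by
      constructor
      · intro h; rw [← h]; group
      · intro h; rw [← h]; group
    have hfst : cs.simple i * (cs.wordProd ω * x * (cs.wordProd ω)⁻¹) * cs.simple i =
        cs.wordProd (i :: ω) * x * (cs.wordProd (i :: ω))⁻¹ := by
      rw [cs.wordProd_cons]
      rw [mul_inv_rev, cs.inv_simple]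
      group
    rw [hris, List.count_cons]
    by_cases h : (cs.wordProd ω)⁻¹ * cs.simple i * cs.wordProd ω = x
    · simp only [h, if_pos (hcond.mpr h), hfst, beq_self_eq_true, if_true]
      rw [pow_succ]
      simp [mul_neg, neg_mul]
    · have h' : ¬(cs.wordProd ω * x * (cs.wordProd ω)⁻¹ = cs.simple i) := fun hh => h (hcond.mp hh)
      have hbeq : (((cs.wordProd ω)⁻¹ * cs.simple i * cs.wordProd ω) == x) = false := by
        simp [h]
      rw [if_neg h', hbeq, hfst]
      simp


theorem ris_alternatingWord (m : ℕ) (i i' : B) :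
    cs.rightInvSeq (alternatingWord i i' m) =
      (List.range m).reverse.map
        (fun k => (cs.simple i' * cs.simple i) ^ k * cs.simple i') := by
  induction m generalizing i i' with
  | zero => simp [alternatingWord]
  | succ m ih =>
    rw [alternatingWord_succ, cs.rightInvSeq_concat, ih i' i, List.map_map]
    have hc : (⇑(MulAut.conj (cs.simple i')) ∘
        fun k => (cs.simple i * cs.simple i') ^ k * cs.simple i)
        = fun k => (cs.simple i' * cs.simple i) ^ (k + 1) * cs.simple i' := by
      funext k
      have hsc : SemiconjBy (cs.simple i') (cs.simple i * cs.simple i')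
          (cs.simple i' * cs.simple i) := by
        unfold SemiconjBy; group
      have hpow := (hsc.pow_right k).eq
      simp only [Function.comp_apply, MulAut.conj_apply, cs.inv_simple]
      rw [pow_succ]
      calc cs.simple i' * ((cs.simple i * cs.simple i') ^ k * cs.simple i) * cs.simple i'
          = (cs.simple i' * (cs.simple i * cs.simple i') ^ k)
              * (cs.simple i * cs.simple i') := by group
        _ = ((cs.simple i' * cs.simple i) ^ k * cs.simple i')
              * (cs.simple i * cs.simple i') := by rw [hpow]
        _ = (cs.simple i' * cs.simple i) ^ k * (cs.simple i' * cs.simple i)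
              * cs.simple i' := by group
    rw [hc, List.range_succ_eq_map, List.reverse_cons]
    simp [List.concat_eq_append, ← List.map_reverse, List.map_map, Function.comp_def]

theorem count_ris_alternatingWord_even (i i' : B) (x : W) :
    Even ((cs.rightInvSeq (alternatingWord i i' (2 * M i i'))).count x) := by
  rw [ris_alternatingWord, two_mul, List.range_add, List.reverse_append, List.map_append]
  have hhalf : ((List.range (M i i')).map (fun k => M i i' + k)).reverse.map
        (fun k => (cs.simple i' * cs.simple i) ^ k * cs.simple i')
      = (List.range (M i i')).reverse.map
        (fun k => (cs.simple i' * cs.simple i) ^ k * cs.simple i') := by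
    rw [← List.map_reverse, List.map_map]
    apply List.map_congr_left
    intro k _
    show (cs.simple i' * cs.simple i) ^ (M i i' + k) * cs.simple i'
      = (cs.simple i' * cs.simple i) ^ k * cs.simple i'
    rw [pow_add, cs.simple_mul_simple_pow' i i', one_mul]
  rw [hhalf, List.count_append]
  exact ⟨_, rfl⟩

theorem permProd_alternatingWord (i i' : B) (m : ℕ) :
    (permAux cs i * permAux cs i') ^ m = permProd cs (alternatingWord i i' (2 * m)) := by
  induction m with
  | zero => simp [permProd, alternatingWord]
  | succ m ih =>
    have h2 : 2 * (m + 1) = (2 * m) + 1 + 1 := by ring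
    rw [h2, alternatingWord_succ', alternatingWord_succ']
    rw [if_neg (by exact (Nat.not_even_iff_odd).mpr ⟨m, by ring⟩ : ¬ Even (2 * m + 1))]
    rw [if_pos (by exact even_two_mul m : Even (2 * m))]
    rw [permProd_cons, permProd_cons, ← ih, pow_succ']
    rw [mul_assoc]

theorem permAux_liftable : M.IsLiftable (fun i => permAux cs i) := by
  intro i i'
  show (permAux cs i * permAux cs i') ^ M i i' = 1
  rw [permProd_alternatingWord]
  apply Equiv.ext
  rintro ⟨x, ε⟩
  rw [permProd_apply]
  have hπ : cs.wordProd (alternatingWord i i' (2 * M i i')) = 1 := by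
    rw [cs.prod_alternatingWord_eq_mul_pow]
    rw [if_pos (even_two_mul _)]
    rw [Nat.mul_div_cancel_left _ (by norm_num : 0 < 2)]
    rw [cs.simple_mul_simple_pow, one_mul]
  rw [hπ, Even.neg_one_pow (count_ris_alternatingWord_even cs i i' x)]
  simp

noncomputable def pRep : W →* Equiv.Perm (W × ℤˣ) :=
  cs.lift ⟨fun i => permAux cs i, permAux_liftable cs⟩

theorem pRep_simple (i : B) : pRep cs (cs.simple i) = permAux cs i :=
  cs.lift_apply_simple (permAux_liftable cs) i

theorem pRep_wordProd (ω : List B) : pRep cs (cs.wordProd ω) = permProd cs ω := by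
  induction ω with
  | nil => simp [permProd_nil, cs.wordProd_nil]
  | cons i ω ih => rw [cs.wordProd_cons, map_mul, ih, pRep_simple, permProd_cons]

noncomputable def nn (w x : W) : ℤˣ := (pRep cs w (x, 1)).2

theorem nn_wordProd (ω : List B) (x : W) :
    nn cs (cs.wordProd ω) x = (-1 : ℤˣ) ^ ((cs.rightInvSeq ω).count x) := by
  show (pRep cs (cs.wordProd ω) (x, 1)).2 = _
  rw [pRep_wordProd, permProd_apply, mul_one]

theorem pRep_apply (w x : W) (ε : ℤˣ) :
    pRep cs w (x, ε) = (w * x * w⁻¹, nn cs w x * ε) := by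
  obtain ⟨ω, rfl⟩ := cs.wordProd_surjective w
  rw [pRep_wordProd, permProd_apply, nn_wordProd]

theorem nn_mul (w₁ w₂ x : W) :
    nn cs (w₁ * w₂) x = nn cs w₂ x * nn cs w₁ (w₂ * x * w₂⁻¹) := by
  calc nn cs (w₁ * w₂) x = (pRep cs (w₁ * w₂) (x, 1)).2 := rfl
    _ = (pRep cs w₁ (pRep cs w₂ (x, 1))).2 := by rw [map_mul]; rfl
    _ = (pRep cs w₁ (w₂ * x * w₂⁻¹, nn cs w₂ x * 1)).2 := by rw [pRep_apply cs w₂]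
    _ = nn cs w₁ (w₂ * x * w₂⁻¹) * (nn cs w₂ x * 1) := by rw [pRep_apply]
    _ = nn cs w₂ x * nn cs w₁ (w₂ * x * w₂⁻¹) := by rw [mul_one, mul_comm]

theorem ris_cons (i : B) (ω : List B) :
    cs.rightInvSeq (i :: ω) =
      ((cs.wordProd ω)⁻¹ * cs.simple i * cs.wordProd ω) :: cs.rightInvSeq ω := rfl

theorem ris_append (ω₁ ω₂ : List B) :
    cs.rightInvSeq (ω₁ ++ ω₂) =
      ((cs.rightInvSeq ω₁).map
        fun u => (cs.wordProd ω₂)⁻¹ * u * cs.wordProd ω₂) ++ cs.rightInvSeq ω₂ := by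
  induction ω₁ with
  | nil => simp
  | cons i ω₁ ih =>
    rw [List.cons_append, ris_cons, ih, ris_cons, List.map_cons, List.cons_append]
    congr 1
    rw [cs.wordProd_append, mul_inv_rev]
    group

theorem count_map_conj (l : List W) (g x : W) :
    (l.map fun u => g * u * g⁻¹).count x = l.count (g⁻¹ * x * g) := by
  induction l with
  | nil => simp
  | cons a l ih =>
    rw [List.map_cons, List.count_cons, List.count_cons, ih]
    congr 1
    by_cases h : a = g⁻¹ * x * g
    · subst h
      have h2 : g * (g⁻¹ * x * g) * g⁻¹ = x := by group
      simp [h2]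
    · have h2 : ¬(g * a * g⁻¹ = x) := by
        intro hh; apply h; rw [← hh]; group
      simp [h, h2]

theorem count_map_conj' (l : List W) (g x : W) :
    (l.map fun u => g⁻¹ * u * g).count x = l.count (g * x * g⁻¹) := by
  have h := count_map_conj l g⁻¹ x
  simpa using h

theorem lis_eq_map_conj (ω : List B) :
    cs.leftInvSeq ω = (cs.rightInvSeq ω).map
      fun u => cs.wordProd ω * u * (cs.wordProd ω)⁻¹ := by
  induction ω with
  | nil => simp
  | cons i ω ih =>
    have hl : cs.leftInvSeq (i :: ω)
        = cs.simple i :: List.map (⇑(MulAut.conj (cs.simple i))) (cs.leftInvSeq ω) := rfl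
    rw [hl, ris_cons, List.map_cons, ih, List.map_map]
    congr 1
    · rw [cs.wordProd_cons]
      group
    · apply List.map_congr_left
      intro u _
      simp only [Function.comp_apply, MulAut.conj_apply, cs.inv_simple, cs.wordProd_cons]
      rw [mul_inv_rev, cs.inv_simple]
      group

theorem nn_refl_self {x : W} (hx : cs.IsReflection x) : nn cs x x = -1 := by
  obtain ⟨v, i, rfl⟩ := hx
  obtain ⟨κ, rfl⟩ := cs.wordProd_surjective v
  have hπθ : cs.wordProd (κ ++ i :: κ.reverse)
      = cs.wordProd κ * cs.simple i * (cs.wordProd κ)⁻¹ := by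
    rw [cs.wordProd_append, cs.wordProd_cons, cs.wordProd_reverse, mul_assoc]
  have hconj1 : (cs.wordProd κ)⁻¹ * (cs.wordProd κ * cs.simple i * (cs.wordProd κ)⁻¹)
      * cs.wordProd κ = cs.simple i := by group
  have hodd : Odd ((cs.rightInvSeq (κ ++ i :: κ.reverse)).count
      (cs.wordProd κ * cs.simple i * (cs.wordProd κ)⁻¹)) := by
    rw [ris_append, List.count_append]
    have hris2 : cs.rightInvSeq (i :: κ.reverse)
        = (cs.wordProd κ * cs.simple i * (cs.wordProd κ)⁻¹) :: cs.rightInvSeq κ.reverse := by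
      rw [ris_cons, cs.wordProd_reverse, inv_inv]
    rw [hris2, List.count_cons]
    rw [if_pos (by simp)]
    have hc1 : ((cs.rightInvSeq κ).map
        fun u => (cs.wordProd (i :: κ.reverse))⁻¹ * u * cs.wordProd (i :: κ.reverse)).count
          (cs.wordProd κ * cs.simple i * (cs.wordProd κ)⁻¹)
        = (cs.rightInvSeq κ).count (cs.simple i) := by
      rw [count_map_conj', cs.wordProd_cons, cs.wordProd_reverse]
      congr 1
      rw [mul_inv_rev, inv_inv, cs.inv_simple]
      simp [mul_assoc, cs.simple_mul_simple_cancel_left, cs.simple_mul_simple_cancel_right]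
    have hc2 : (cs.rightInvSeq κ.reverse).count
        (cs.wordProd κ * cs.simple i * (cs.wordProd κ)⁻¹)
        = (cs.rightInvSeq κ).count (cs.simple i) := by
      rw [cs.rightInvSeq_reverse, List.count_reverse, lis_eq_map_conj, count_map_conj]
      rw [hconj1]
    rw [hc1, hc2]
    exact ⟨(cs.rightInvSeq κ).count (cs.simple i), by ring⟩
  have hfin : nn cs (cs.wordProd (κ ++ i :: κ.reverse))
      (cs.wordProd κ * cs.simple i * (cs.wordProd κ)⁻¹) = -1 := by
    rw [nn_wordProd, hodd.neg_one_pow]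
  rwa [hπθ] at hfin

theorem mem_ris_of_nn {ω : List B} {x : W} (h : nn cs (cs.wordProd ω) x = -1) :
    x ∈ cs.rightInvSeq ω := by
  rw [nn_wordProd] at h
  rcases Nat.even_or_odd ((cs.rightInvSeq ω).count x) with he | ho
  · rw [he.neg_one_pow] at h
    exact absurd h (by decide)
  · have hpos : 0 < (cs.rightInvSeq ω).count x := ho.pos
    exact List.count_pos_iff.mp hpos

theorem isRightInversion_of_nn {w x : W} (hx : cs.IsReflection x)
    (h : nn cs w x = -1) : cs.IsRightInversion w x := by
  obtain ⟨ω, hred, rfl⟩ := cs.exists_reduced_word' w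
  exact cs.isRightInversion_of_mem_rightInvSeq hred (mem_ris_of_nn cs h)

theorem isRightInversion_iff_nn {w x : W} (hx : cs.IsReflection x) :
    cs.IsRightInversion w x ↔ nn cs w x = -1 := by
  constructor
  · rintro ⟨-, hlt⟩
    rcases Int.units_eq_one_or (nn cs w x) with h1 | h1
    · exfalso
      have hmm : nn cs (w * x) x = -1 := by
        rw [nn_mul, nn_refl_self cs hx]
        have hxx : x * x * x⁻¹ = x := by group
        rw [hxx, h1]
        norm_num
      have hinv := (isRightInversion_of_nn cs hx hmm).2
      rw [mul_assoc, hx.mul_self, mul_one] at hinv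
      omega
    · exact h1
  · exact fun h => isRightInversion_of_nn cs hx h

theorem isLeftInversion_iff_nn {w x : W} (hx : cs.IsReflection x) :
    cs.IsLeftInversion w x ↔ nn cs w⁻¹ x = -1 := by
  rw [← cs.isRightInversion_inv_iff]
  exact isRightInversion_iff_nn cs hx

theorem left_cocycle {x : W} (hx : cs.IsReflection x) (w₁ w₂ : W) :
    cs.IsLeftInversion (w₁ * w₂) x ↔
      (cs.IsLeftInversion w₁ x ↔ ¬ cs.IsLeftInversion w₂ (w₁⁻¹ * x * w₁)) := by
  have hx2 : cs.IsReflection (w₁⁻¹ * x * w₁) := by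
    have := hx.conj w₁⁻¹
    rwa [inv_inv] at this
  rw [isLeftInversion_iff_nn cs hx (w := w₁ * w₂), isLeftInversion_iff_nn cs hx (w := w₁),
    isLeftInversion_iff_nn cs hx2]
  rw [mul_inv_rev, nn_mul, inv_inv]
  generalize nn cs w₁⁻¹ x = a
  generalize nn cs w₂⁻¹ (w₁⁻¹ * x * w₁) = b
  rcases Int.units_eq_one_or a with rfl | rfl <;>
    rcases Int.units_eq_one_or b with rfl | rfl <;> simp <;> decide

theorem prefix_struct {r p : W} (hr : cs.IsReflection r)
    (hp1 : cs.length p + cs.length (p⁻¹ * r) = cs.length r)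
    (hp2 : 2 * cs.length p = cs.length r + 1) :
    ∃ i : B, r = p * cs.simple i * p⁻¹ ∧ cs.length (p * cs.simple i) + 1 = cs.length p := by
  have hrp : cs.length (r * p) + 1 = cs.length p := by
    have h2 : cs.length (r * p) = cs.length (p⁻¹ * r) := by
      rw [← cs.length_inv (p⁻¹ * r), mul_inv_rev, inv_inv, hr.inv]
    omega
  have hLinv : cs.IsLeftInversion p r := ⟨hr, by omega⟩
  obtain ⟨ω, hlen, hw⟩ := cs.exists_reduced_word p
  have hred : cs.IsReduced ω := hlen
  have hlen : cs.length p = ω.length := by rw [hw]; exact hred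
  have hmem : r ∈ cs.leftInvSeq ω := by
    have h1 : cs.IsRightInversion p⁻¹ r := cs.isRightInversion_inv_iff.mpr hLinv
    have h2 : nn cs p⁻¹ r = -1 := (isRightInversion_iff_nn cs hr).mp h1
    have h3 : p⁻¹ = cs.wordProd ω.reverse := by rw [cs.wordProd_reverse, ← hw]
    rw [h3] at h2
    have h4 := mem_ris_of_nn cs h2
    rw [cs.rightInvSeq_reverse] at h4
    exact List.mem_reverse.mp h4
  obtain ⟨j, hj, hget⟩ := List.mem_iff_getElem.mp hmem
  have hjlt : j < ω.length := by rwa [cs.length_leftInvSeq] at hj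
  have hgetD : (cs.leftInvSeq ω).getD j 1 = r := by
    rw [List.getD_eq_getElem _ _ hj, hget]
  have hr_eq : r = cs.wordProd (ω.take j) * cs.simple (ω[j]'hjlt) * (cs.wordProd (ω.take j))⁻¹ := by
    rw [← hgetD, cs.getD_leftInvSeq]
    congr
    rw [List.getElem?_eq_getElem hjlt]
    rfl
  set y := cs.wordProd (ω.take j) with hy_def
  have hylen_le : cs.length y ≤ j := by
    have := cs.length_wordProd_le (ω.take j)
    rwa [List.length_take, min_eq_left (le_of_lt hjlt)] at this
  have hlr : cs.length r + 1 = 2 * cs.length p := by omega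
  have hrle : cs.length r ≤ 2 * j + 1 := by
    rw [hr_eq]
    calc cs.length (y * cs.simple (ω[j]'hjlt) * y⁻¹)
        ≤ cs.length (y * cs.simple (ω[j]'hjlt)) + cs.length y⁻¹ := cs.length_mul_le _ _
      _ ≤ cs.length y + cs.length (cs.simple (ω[j]'hjlt)) + cs.length y⁻¹ :=
          Nat.add_le_add_right (cs.length_mul_le _ _) _
      _ = cs.length y + 1 + cs.length y := by rw [cs.length_simple, cs.length_inv]
      _ ≤ 2 * j + 1 := by omega
  have hj_eq : j = cs.length p - 1 := by omega
  have hp_eq : p = y * cs.simple (ω[j]'hjlt) := by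
    have hsplit : ω = ω.take j ++ ω.drop j := (List.take_append_drop j ω).symm
    have hdrop : ω.drop j = [ω[j]'hjlt] := by
      rw [List.drop_eq_getElem_cons hjlt]
      have : ω.drop (j + 1) = [] := by
        apply List.drop_eq_nil_of_le
        omega
      rw [this]
    calc p = cs.wordProd ω := hw
      _ = cs.wordProd (ω.take j ++ ω.drop j) := by rw [← hsplit]
      _ = y * cs.wordProd (ω.drop j) := by rw [cs.wordProd_append]
      _ = y * cs.simple (ω[j]'hjlt) := by rw [hdrop, cs.wordProd_singleton]
  have hy_eq : y = p * cs.simple (ω[j]'hjlt) := by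
    rw [hp_eq, cs.simple_mul_simple_cancel_right]
  refine ⟨ω[j]'hjlt, ?_, ?_⟩
  · rw [hr_eq, hy_eq]
    rw [mul_inv_rev, cs.inv_simple]
    simp [mul_assoc, cs.simple_mul_simple_cancel_left]
  · rw [← hy_eq]
    have hge : cs.length p ≤ cs.length y + 1 := by
      have := cs.length_mul_le y (cs.simple (ω[j]'hjlt))
      rw [cs.length_simple, ← hp_eq] at this
      exact this
    omega

theorem canonical_of_prefix {r p : W} (hr : cs.IsReflection r)
    (hp1 : cs.length p + cs.length (p⁻¹ * r) = cs.length r)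
    (hp2 : 2 * cs.length p = cs.length r + 1)
    (H : Subgroup W) (hrH : r ∈ H)
    (honly : ∀ u : W, u ∈ H → cs.IsLeftInversion p u → u = r) :
    ∀ v : W, v ∈ H → cs.IsLeftInversion r v → v = r := by
  obtain ⟨i, hri, hilen⟩ := prefix_struct cs hr hp1 hp2
  intro v hvH hvr
  have hvrefl : cs.IsReflection v := hvr.1
  by_cases hvp : cs.IsLeftInversion p v
  · exact honly v hvH hvp
  · have hpz : p * (cs.simple i * p⁻¹) = r := by rw [hri]; group
    have hcoc := (left_cocycle cs hvrefl p (cs.simple i * p⁻¹)).mp (by rw [hpz]; exact hvr)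
    have hzinv : cs.IsLeftInversion (cs.simple i * p⁻¹) (p⁻¹ * v * p) :=
      not_not.mp (fun hh => hvp (hcoc.mpr hh))
    have hc_refl : cs.IsReflection (p⁻¹ * v * p) := by
      have := hvrefl.conj p⁻¹
      rwa [inv_inv] at this
    have hzy : cs.simple i * p⁻¹ = (p * cs.simple i)⁻¹ := by
      rw [mul_inv_rev, cs.inv_simple]
    have hlen_z : cs.length (cs.simple i * p⁻¹) + 1 = cs.length p := by
      rw [hzy, cs.length_inv]
      omega
    have hrvr_refl : cs.IsReflection (r * v * r) := by
      have := hvrefl.conj r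
      rwa [hr.inv] at this
    have key : cs.length ((r * v * r) * p) < cs.length p := by
      have h1 : (r * v * r) * p = ((p * cs.simple i) * (p⁻¹ * v * p)) * cs.simple i := by
        rw [hri]; group
      have h2 := hzinv.2
      have h3 : cs.length ((p * cs.simple i) * (p⁻¹ * v * p))
          = cs.length ((p⁻¹ * v * p) * (cs.simple i * p⁻¹)) := by
        rw [← cs.length_inv ((p * cs.simple i) * (p⁻¹ * v * p)), mul_inv_rev, hc_refl.inv, hzy]
      have h4 := cs.length_mul_le ((p * cs.simple i) * (p⁻¹ * v * p)) (cs.simple i)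
      rw [cs.length_simple] at h4
      rw [h1]
      omega
    have hrvr := honly (r * v * r) (H.mul_mem (H.mul_mem hrH hvH) hrH) ⟨hrvr_refl, key⟩
    calc v = (r * r) * v * (r * r) := by rw [hr.mul_self, one_mul, mul_one]
      _ = r * (r * v * r) * r := by group
      _ = r * r * r := by rw [hrvr]
      _ = r := by rw [hr.mul_self, one_mul]

theorem peel {r t : W} (hr : cs.IsReflection r) (ht : cs.IsReflection t)
    (H : Subgroup W) (hrH : r ∈ H) (htH : t ∈ H)
    (hcr : ∀ v : W, v ∈ H → cs.IsLeftInversion r v → v = r)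
    (hct : ∀ v : W, v ∈ H → cs.IsLeftInversion t v → v = t) :
    ∀ (l : List W), (∀ x ∈ l, x = r ∨ x = t) → ∀ v : W, v ∈ H →
      cs.IsLeftInversion l.prod v →
      ∃ κ δ : List W, ∃ y : W, l = κ ++ y :: δ ∧ v = κ.prod * y * κ.prod⁻¹ := by
  intro l
  induction l with
  | nil =>
    intro _ v _ hinv
    exfalso
    have h := hinv.2
    rw [List.prod_nil, mul_one, cs.length_one] at h
    omega
  | cons x l ih =>
    intro hmem v hvH hinv
    have hx : x = r ∨ x = t := hmem x List.mem_cons_self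
    have hxrefl : cs.IsReflection x := by
      rcases hx with rfl | rfl
      exacts [hr, ht]
    have hxH : x ∈ H := by
      rcases hx with rfl | rfl
      exacts [hrH, htH]
    have hvrefl : cs.IsReflection v := hinv.1
    rw [List.prod_cons] at hinv
    have hcoc := (left_cocycle cs hvrefl x l.prod).mp hinv
    by_cases hvx : cs.IsLeftInversion x v
    · have hveq : v = x := by
        rcases hx with rfl | rfl
        · exact hcr v hvH hvx
        · exact hct v hvH hvx
      exact ⟨[], l, x, rfl, by simp [hveq]⟩
    · have h2 : cs.IsLeftInversion l.prod (x⁻¹ * v * x) :=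
        not_not.mp (fun hh => hvx (hcoc.mpr hh))
      have hxvH : x⁻¹ * v * x ∈ H := H.mul_mem (H.mul_mem (H.inv_mem hxH) hvH) hxH
      obtain ⟨κ, δ, y, hl, hv⟩ := ih (fun a ha => hmem a (List.mem_cons_of_mem x ha)) _ hxvH h2
      refine ⟨x :: κ, δ, y, by rw [hl]; rfl, ?_⟩
      have hvv : v = x * (x⁻¹ * v * x) * x⁻¹ := by group
      rw [hvv, hv, List.prod_cons, mul_inv_rev]
      group

theorem claimD {r t : W} (hr : cs.IsReflection r) (ht : cs.IsReflection t)
    (H : Subgroup W) (hrH : r ∈ H) (htH : t ∈ H)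
    (hcr : ∀ v : W, v ∈ H → cs.IsLeftInversion r v → v = r)
    (hct : ∀ v : W, v ∈ H → cs.IsLeftInversion t v → v = t) :
    ∀ (n : ℕ) (l : List W), l.length ≤ n → (∀ x ∈ l, x = r ∨ x = t) → l.prod ≠ 1 →
      cs.IsLeftInversion l.prod r ∨ cs.IsLeftInversion l.prod t := by
  intro n
  induction n with
  | zero =>
    intro l hlen _ hne
    rw [List.length_eq_zero_iff.mp (Nat.le_zero.mp hlen)] at hne
    exact absurd rfl hne
  | succ n ih =>
    intro l hlen hmem hne
    match l with
    | [] => exact absurd rfl hne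
    | x :: l' =>
      have hx : x = r ∨ x = t := hmem x List.mem_cons_self
      have hxrefl : cs.IsReflection x := by
        rcases hx with rfl | rfl
        exacts [hr, ht]
      have hxH : x ∈ H := by
        rcases hx with rfl | rfl
        exacts [hrH, htH]
      have hsub : ∀ a ∈ l', a = r ∨ a = t := fun a ha => hmem a (List.mem_cons_of_mem x ha)
      by_cases hinv : cs.IsLeftInversion (x :: l').prod x
      · rcases hx with rfl | rfl
        · exact Or.inl hinv
        · exact Or.inr hinv
      · have hlp : (x :: l').prod = x * l'.prod := List.prod_cons
        have hxx : x * (x :: l').prod = l'.prod := by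
          rw [hlp, ← mul_assoc, hxrefl.mul_self, one_mul]
        have hneq := hxrefl.length_mul_right_ne ((x :: l').prod)
        have hn : ¬ (cs.length (x * (x :: l').prod) < cs.length ((x :: l').prod)) :=
          fun hh => hinv ⟨hxrefl, hh⟩
        rw [hxx] at hneq hn
        have hinv' : cs.IsLeftInversion l'.prod x := by
          refine ⟨hxrefl, ?_⟩
          rw [← hlp]
          omega
        obtain ⟨κ, δ, y, hl', hveq⟩ := peel cs hr ht H hrH htH hcr hct l' hsub x hxH hinv'
        have hyl' : y ∈ l' := by
          rw [hl']
          exact List.mem_append.mpr (Or.inr List.mem_cons_self)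
        have hyrefl : cs.IsReflection y := by
          rcases hsub y hyl' with rfl | rfl
          exacts [hr, ht]
        have hprod : (x :: l').prod = (κ ++ δ).prod := by
          rw [hlp, hl', hveq, List.prod_append, List.prod_cons, List.prod_append]
          calc (κ.prod * y * κ.prod⁻¹) * (κ.prod * (y * δ.prod))
              = κ.prod * (y * y) * δ.prod := by group
            _ = κ.prod * δ.prod := by rw [hyrefl.mul_self, mul_one]
        have hlen' : (κ ++ δ).length ≤ n := by
          have h1 : l'.length = κ.length + (δ.length + 1) := by
            rw [hl']
            simp
          have h2 : (x :: l').length = l'.length + 1 := by simp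
          rw [List.length_append]
          omega
        have hmem' : ∀ a ∈ κ ++ δ, a = r ∨ a = t := by
          intro a ha
          apply hsub
          rw [hl']
          rcases List.mem_append.mp ha with h | h
          · exact List.mem_append.mpr (Or.inl h)
          · exact List.mem_append.mpr (Or.inr (List.mem_cons_of_mem y h))
        have hne' : (κ ++ δ).prod ≠ 1 := by
          rw [← hprod]
          exact hne
        have hres := ih (κ ++ δ) hlen' hmem' hne'
        rw [← hprod] at hres
        exact hres

end StmtAux


/-- If `r` is the only reflection of `W' = ⟨r, t⟩` that is a left
inversion of the `r`-prefix `p_r`, and `t` is the only reflection of `W'` that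
is a left inversion of the `t`-prefix `p_t`, then the canonical generators of
`W'` are exactly `{r, t}`. -/
theorem stmt_6 {B : Type*} {W : Type*} [Group W] {M : CoxeterMatrix B}
    (cs : CoxeterSystem M W) (r t : W)
    (hr : cs.IsReflection r) (ht : cs.IsReflection t) (hne : r ≠ t)
    (p_r p_t : W)
    (hpr1 : cs.length p_r + cs.length (p_r⁻¹ * r) = cs.length r)
    (hpr2 : 2 * cs.length p_r = cs.length r + 1)
    (hpt1 : cs.length p_t + cs.length (p_t⁻¹ * t) = cs.length t)
    (hpt2 : 2 * cs.length p_t = cs.length t + 1)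
    (hronly : ∀ u : W, u ∈ Subgroup.closure ({r, t} : Set W) →
      cs.IsLeftInversion p_r u → u = r)
    (htonly : ∀ u : W, u ∈ Subgroup.closure ({r, t} : Set W) →
      cs.IsLeftInversion p_t u → u = t) :
    {u : W | u ∈ Subgroup.closure ({r, t} : Set W) ∧ cs.IsReflection u ∧
        ∀ v : W, v ∈ Subgroup.closure ({r, t} : Set W) →
          cs.IsLeftInversion u v → v = u} = {r, t} := by
  classical
  have hrH : r ∈ Subgroup.closure ({r, t} : Set W) :=
    Subgroup.subset_closure (Set.mem_insert r {t})
  have htH : t ∈ Subgroup.closure ({r, t} : Set W) :=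
    Subgroup.subset_closure (Set.mem_insert_of_mem r rfl)
  have hcr := StmtAux.canonical_of_prefix cs hr hpr1 hpr2
    (Subgroup.closure ({r, t} : Set W)) hrH hronly
  have hct := StmtAux.canonical_of_prefix cs ht hpt1 hpt2
    (Subgroup.closure ({r, t} : Set W)) htH htonly
  ext u
  simp only [Set.mem_setOf_eq, Set.mem_insert_iff, Set.mem_singleton_iff]
  constructor
  · rintro ⟨huH, hurefl, hucanon⟩
    have hune : u ≠ 1 := by
      intro h
      have hodd := hurefl.odd_length
      rw [h, cs.length_one] at hodd
      norm_num at hodd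
    have hu' : u ∈ Submonoid.closure (({r, t} : Set W) ∪ ({r, t} : Set W)⁻¹) := by
      rw [← Subgroup.closure_toSubmonoid]
      exact huH
    obtain ⟨l, hlmem, hlprod⟩ := Submonoid.exists_list_of_mem_closure hu'
    have hlmem' : ∀ x ∈ l, x = r ∨ x = t := by
      intro x hxl
      rcases hlmem x hxl with h | h
      · simpa using h
      · rw [Set.mem_inv] at h
        simp only [Set.mem_insert_iff, Set.mem_singleton_iff] at h
        rcases h with h' | h'
        · exact Or.inl (by rw [← inv_inv x, h', hr.inv])
        · exact Or.inr (by rw [← inv_inv x, h', ht.inv])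
    have hres := StmtAux.claimD cs hr ht (Subgroup.closure ({r, t} : Set W)) hrH htH hcr hct
      l.length l le_rfl hlmem' (by rw [hlprod]; exact hune)
    rw [hlprod] at hres
    rcases hres with h | h
    · exact Or.inl ((hucanon r hrH h).symm)
    · exact Or.inr ((hucanon t htH h).symm)
  · rintro (rfl | rfl)
    · exact ⟨hrH, hr, fun v hv hinv => hcr v hv hinv⟩
    · exact ⟨htH, ht, fun v hv hinv => hct v hv hinv⟩
end

section
/- For every word ω : List B, ω is a palindromic reduced word (ω ≠ [], ω is reduced, and ω.reverse = ω) if and only if there exists σ : List B with σ ≠ [], σ ++ σ.dropLast.reverse reduced (i.e., σ ∈ Pref_T), and ω = σ ++ σ.dropLast.reverse. -/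
/-!
A palindrome of even length `2k` is `α ++ α.reverse` with `α` its first half; such a word
represents `π α * (π α)⁻¹ = 1`, so it is reduced only when it is empty. Hence a nonempty reduced
palindrome has odd length `2k + 1`, and then it is `σ ++ σ.dropLast.reverse` for `σ` its first
`k + 1` letters. Conversely every word of that shape is a palindrome.
-/

namespace List

variable {α : Type*}

theorem reverse_append_dropLast_reverse (σ : List α) :
    (σ ++ σ.dropLast.reverse).reverse = σ ++ σ.dropLast.reverse := by
  rcases σ.eq_nil_or_concat with rfl | ⟨τ, a, rfl⟩
  · rfl
  · simp

theorem drop_eq_reverse_take_of_reverse_eq {ω : List α} (h : ω.reverse = ω) {k m : ℕ}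
    (hkm : k + m = ω.length) : ω.drop k = (ω.take m).reverse := by
  rw [reverse_take, h]
  congr 1
  omega

theorem eq_take_append_reverse_take_of_reverse_eq {ω : List α} (h : ω.reverse = ω) {k : ℕ}
    (hk : ω.length = 2 * k) : ω = ω.take k ++ (ω.take k).reverse := by
  rw [← drop_eq_reverse_take_of_reverse_eq h (k := k) (m := k) (by omega), take_append_drop]

theorem eq_take_append_dropLast_reverse_of_reverse_eq {ω : List α} (h : ω.reverse = ω) {k : ℕ}
    (hk : ω.length = 2 * k + 1) :
    ω = ω.take (k + 1) ++ (ω.take (k + 1)).dropLast.reverse := by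
  have hdropLast : (ω.take (k + 1)).dropLast = ω.take k := by
    rw [dropLast_eq_take, length_take, take_take]
    congr 1
    omega
  rw [hdropLast, ← drop_eq_reverse_take_of_reverse_eq h (k := k + 1) (m := k) (by omega),
    take_append_drop]

end List

namespace CoxeterSystem

variable {B W : Type*} [Group W] {M : CoxeterMatrix B} {cs : CoxeterSystem M W}

theorem IsReduced.eq_nil_of_append_reverse {α : List B} (h : cs.IsReduced (α ++ α.reverse)) :
    α = [] := by
  have hone : cs.wordProd (α ++ α.reverse) = 1 := by
    rw [wordProd_append, wordProd_reverse, mul_inv_cancel]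
  have hlen := h.eq
  rw [hone, length_one] at hlen
  simpa using hlen.symm

end CoxeterSystem

/-- `ω` is a palindromic reduced word iff `ω = σ ++ σ.dropLast.reverse`
for some word `σ` in the language of reduced words for reflection-prefixes. -/
theorem stmt_9 {B : Type*} {W : Type*} [Group W] {M : CoxeterMatrix B}
    (cs : CoxeterSystem M W) (ω : List B) :
    (ω ≠ [] ∧ cs.IsReduced ω ∧ ω.reverse = ω) ↔
      ∃ σ : List B, σ ≠ [] ∧ cs.IsReduced (σ ++ σ.dropLast.reverse) ∧
        ω = σ ++ σ.dropLast.reverse := by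
  constructor
  · rintro ⟨hne, hred, hpal⟩
    obtain ⟨k, hk | hk⟩ := ω.length.even_or_odd'
    · have hsplit := List.eq_take_append_reverse_take_of_reverse_eq hpal hk
      rw [hsplit] at hred
      rw [hsplit, hred.eq_nil_of_append_reverse] at hne
      exact absurd rfl hne
    · have hsplit := List.eq_take_append_dropLast_reverse_of_reverse_eq hpal hk
      refine ⟨ω.take (k + 1), ?_, hsplit ▸ hred, hsplit⟩
      rw [← List.length_pos_iff, List.length_take]
      omega
  · rintro ⟨σ, hne, hred, rfl⟩
    exact ⟨by simp [hne], hred, σ.reverse_append_dropLast_reverse⟩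
end

section
/- Assume the index type B is finite. For every k ∈ ℕ, the number of palindromic reduced words of length 2k+1 equals the number of words ω ∈ Pref_T with ω.length = k+1; and for every k ≥ 1 there is no palindromic reduced word of length 2k. (Equivalently, the generating functions satisfy Pal(q) = q · Pref_T(q²) up to the length bookkeeping above.) -/
/-- The number of palindromic reduced words of length `2k+1`
equals the number of reflection-prefix reduced words of length `k+1`, and
there are no palindromic reduced words of positive even length. -/
theorem stmt_11 {B : Type*} [Fintype B] {W : Type*} [Group W]
    {M : CoxeterMatrix B} (cs : CoxeterSystem M W) :
    (∀ k : ℕ,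
      ({ω : List B | ω ≠ [] ∧ cs.IsReduced ω ∧ ω.reverse = ω ∧
        ω.length = 2 * k + 1} : Set (List B)).ncard =
      ({ω : List B | (ω ≠ [] ∧ cs.IsReduced (ω ++ ω.dropLast.reverse)) ∧
        ω.length = k + 1} : Set (List B)).ncard) ∧
    (∀ k : ℕ, 1 ≤ k →
      ¬ ∃ ω : List B, ω ≠ [] ∧ cs.IsReduced ω ∧ ω.reverse = ω ∧
        ω.length = 2 * k) := by
  constructor
  · intro k
    have himg : ({ω : List B | ω ≠ [] ∧ cs.IsReduced ω ∧ ω.reverse = ω ∧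
          ω.length = 2 * k + 1} : Set (List B))
        = (fun u : List B => u ++ u.dropLast.reverse) ''
          {ω : List B | (ω ≠ [] ∧ cs.IsReduced (ω ++ ω.dropLast.reverse)) ∧
            ω.length = k + 1} := by
      ext ω
      simp only [Set.mem_setOf_eq, Set.mem_image]
      constructor
      · rintro ⟨hne, hred, hpal, hlen⟩
        have hlen' : (ω.take (k+1)).length = k + 1 := by
          rw [List.length_take]; omega
        have hdl : (ω.take (k+1)).dropLast = ω.take k := by
          rw [List.dropLast_eq_take, List.take_take, hlen']
          congr 1; omega
        have hrev : (ω.take k).reverse = ω.drop (k+1) := by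
          rw [List.reverse_take, hpal, hlen]; congr 1; omega
        have hkey : ω.take (k+1) ++ (ω.take (k+1)).dropLast.reverse = ω := by
          rw [hdl, hrev, List.take_append_drop]
        refine ⟨ω.take (k+1), ⟨⟨?_, ?_⟩, hlen'⟩, hkey⟩
        · intro h; rw [h] at hlen'; simp at hlen'
        · rw [hkey]; exact hred
      · rintro ⟨u, ⟨⟨hne, hred⟩, hlen⟩, rfl⟩
        obtain ⟨v, a, rfl⟩ : ∃ v a, u = v ++ [a] :=
          ⟨u.dropLast, u.getLast hne, (List.dropLast_append_getLast hne).symm⟩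
        refine ⟨by simp, hred, ?_, ?_⟩
        · simp [List.reverse_append]
        · simp only [List.length_append, List.length_reverse, List.dropLast_concat,
            List.length_append, List.length_cons, List.length_nil] at hlen ⊢
          omega
    have hinj : Set.InjOn (fun u : List B => u ++ u.dropLast.reverse)
        {ω : List B | (ω ≠ [] ∧ cs.IsReduced (ω ++ ω.dropLast.reverse)) ∧
          ω.length = k + 1} := by
      intro ω₁ h₁ ω₂ h₂ heq
      have e1 : ω₁ = (ω₁ ++ ω₁.dropLast.reverse).take (k+1) := by
        rw [← h₁.2]; exact List.take_left.symm
      have e2 : ω₂ = (ω₂ ++ ω₂.dropLast.reverse).take (k+1) := by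
        rw [← h₂.2]; exact List.take_left.symm
      rw [e1, e2]
      exact congrArg (List.take (k+1)) heq
    rw [himg, Set.ncard_image_of_injOn hinj]
  · rintro k hk ⟨ω, hne, hred, hpal, hlen⟩
    have hrev : (ω.take k).reverse = ω.drop k := by
      rw [List.reverse_take, hpal, hlen]; congr 1; omega
    have hω : ω = ω.take k ++ (ω.take k).reverse := by
      rw [hrev, List.take_append_drop]
    have h1 : cs.wordProd ω = 1 := by
      rw [hω, cs.wordProd_append, cs.wordProd_reverse, mul_inv_cancel]
    have h0 : cs.length (cs.wordProd ω) = ω.length := hred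
    rw [h1, cs.length_one] at h0
    omega
end

section
/- Let cs : CoxeterSystem M W be the universal Coxeter system on an index type B, i.e., M : CoxeterMatrix B satisfies M i j = 0 for all i ≠ j (0 encoding infinite order of sᵢ * sⱼ) and M i i = 1. Then every nonempty reduced word ω : List B satisfies that ω ++ ω.dropLast.reverse is reduced; that is, the language Pref_T of reduced words for reflection-prefixes coincides with the set of all nonempty reduced words. -/
open List CoxeterSystem

namespace Stmt14Aux

variable {B : Type*}

/-- The set of words with no adjacent equal letters. -/
abbrev S (B : Type*) := {l : List B // l.Chain' (· ≠ ·)}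

open Classical in
/-- The action of a letter on chain words. -/
noncomputable def act (i : B) : S B → S B
  | ⟨[], _⟩ => ⟨[i], List.isChain_singleton i⟩
  | ⟨a :: t, h⟩ =>
    if hai : a = i then ⟨t, h.tail⟩
    else ⟨i :: a :: t, h.cons_cons (fun he => hai he.symm)⟩

theorem act_involutive (i : B) : Function.Involutive (act i) := by
  rintro ⟨l, h⟩
  apply Subtype.ext
  match l, h with
  | [], h => simp [act]
  | a :: t, h =>
    by_cases hai : a = i
    · subst hai
      match t, h with
      | [], h => simp [act]
      | b :: t', h =>
        have hba : ¬ b = a := fun hc => (List.isChain_cons_cons.mp h).1 hc.symm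
        simp [act, hba]
    · simp [act, hai]

/-- The permutation of chain words induced by a letter. -/
noncomputable def actPerm (i : B) : Equiv.Perm (S B) :=
  (act_involutive i).toPerm

variable {W : Type*} [Group W] {M : CoxeterMatrix B}

theorem liftable (hM : ∀ i j : B, i ≠ j → M i j = 0) :
    CoxeterMatrix.IsLiftable M (actPerm (B := B)) := by
  intro i j
  by_cases h : i = j
  · subst h
    rw [M.diagonal i, pow_one]
    exact Equiv.ext fun l => by
      simpa [actPerm, Equiv.Perm.mul_apply] using act_involutive i l
  · rw [hM i j h, pow_zero]

variable (cs : CoxeterSystem M W)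

local prefix:100 "π" => cs.wordProd
local prefix:100 "ℓ" => cs.length

noncomputable def φ (hM : ∀ i j : B, i ≠ j → M i j = 0) : W →* Equiv.Perm (S B) :=
  cs.lift ⟨actPerm, liftable hM⟩

theorem φ_wordProd (hM : ∀ i j : B, i ≠ j → M i j = 0) (ω : List B)
    (hω : ω.Chain' (· ≠ ·)) :
    φ cs hM (π ω) ⟨[], List.isChain_nil⟩ = ⟨ω, hω⟩ := by
  induction ω with
  | nil => simp [φ]
  | cons i t ih =>
    rw [cs.wordProd_cons, map_mul]
    have ht : t.Chain' (· ≠ ·) := hω.tail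
    simp only [Equiv.Perm.mul_apply, ih ht]
    have hs : φ cs hM (cs.simple i) = actPerm i := cs.lift_apply_simple (liftable hM) i
    rw [hs]
    show act i ⟨t, ht⟩ = ⟨i :: t, hω⟩
    apply Subtype.ext
    cases t with
    | nil => simp [act]
    | cons b t' =>
      have hbi : ¬ b = i := fun hc => (List.isChain_cons_cons.mp hω).1 hc.symm
      simp [act, hbi]

/-- Deleting an adjacent equal pair. -/
theorem exists_shorter (ω : List B) (h : ¬ ω.Chain' (· ≠ ·)) :
    ∃ ω' : List B, π ω' = π ω ∧ ω'.length + 2 = ω.length := by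
  induction ω with
  | nil => exact absurd List.isChain_nil h
  | cons i t ih =>
    rw [List.Chain', List.isChain_cons] at h
    by_cases ht : t.Chain' (· ≠ ·)
    · have h2 : ¬ ∀ b ∈ t.head?, i ≠ b := fun hall => h ⟨hall, ht⟩
      push_neg at h2
      obtain ⟨b, hb, hib⟩ := h2
      cases t with
      | nil => simp at hb
      | cons c t' =>
        simp only [List.head?_cons, Option.mem_def, Option.some.injEq] at hb
        subst hb
        subst hib
        refine ⟨t', ?_, by simp⟩
        rw [cs.wordProd_cons, cs.wordProd_cons, cs.simple_mul_simple_cancel_left]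
    · obtain ⟨ω', hπ, hlen⟩ := ih ht
      exact ⟨i :: ω', by rw [cs.wordProd_cons, cs.wordProd_cons, hπ], by simp [← hlen]⟩

theorem chain'_of_isReduced {ω : List B} (h : cs.IsReduced ω) : ω.Chain' (· ≠ ·) := by
  by_contra hc
  obtain ⟨ω', hπ, hlen⟩ := exists_shorter cs ω hc
  have h1 : ℓ (π ω) ≤ ω'.length := hπ ▸ cs.length_wordProd_le ω'
  rw [h] at h1
  omega

theorem isReduced_of_chain' (hM : ∀ i j : B, i ≠ j → M i j = 0) {ω : List B}
    (hω : ω.Chain' (· ≠ ·)) : cs.IsReduced ω := by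
  obtain ⟨ω', hred, hw⟩ := cs.exists_reduced_word' (π ω)
  have hω' : ω'.Chain' (· ≠ ·) := chain'_of_isReduced cs hred
  have h1 : φ cs hM (π ω) ⟨[], List.isChain_nil⟩ = ⟨ω, hω⟩ := φ_wordProd cs hM ω hω
  have h2 : φ cs hM (π ω') ⟨[], List.isChain_nil⟩ = ⟨ω', hω'⟩ := φ_wordProd cs hM ω' hω'
  rw [← hw, h1] at h2
  have heq : ω = ω' := congrArg Subtype.val h2
  rw [heq]
  exact hred

end Stmt14Aux

/-- In the universal Coxeter system, the language of reduced
words for reflection-prefixes coincides with the set of all nonempty reduced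
words. -/
theorem stmt_14 {B : Type*} {W : Type*} [Group W] {M : CoxeterMatrix B}
    (hM : ∀ i j : B, i ≠ j → M i j = 0)
    (cs : CoxeterSystem M W) :
    {ω : List B | ω ≠ [] ∧ cs.IsReduced (ω ++ ω.dropLast.reverse)} =
      {ω : List B | ω ≠ [] ∧ cs.IsReduced ω} := by
  ext ω
  simp only [Set.mem_setOf_eq]
  constructor
  · rintro ⟨hne, hred⟩
    refine ⟨hne, ?_⟩
    have := hred.take ω.length
    rwa [List.take_left] at this
  · rintro ⟨hne, hred⟩
    refine ⟨hne, ?_⟩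
    apply Stmt14Aux.isReduced_of_chain' cs hM
    have hω : ω.Chain' (· ≠ ·) := Stmt14Aux.chain'_of_isReduced cs hred
    rw [List.Chain', List.isChain_append]
    refine ⟨hω, ?_, ?_⟩
    · rw [List.isChain_reverse]
      exact (hω.dropLast).imp fun a b h => h.symm
    · obtain ⟨a, z, rfl⟩ : ∃ a z, ω = a ++ [z] := by
        rcases List.eq_nil_or_concat ω with h | ⟨a, z, h⟩
        · exact absurd h hne
        · exact ⟨a, z, by simpa using h⟩
      intro x hx y hy
      rw [List.getLast?_concat] at hx
      obtain rfl : z = x := by simpa using hx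
      rw [List.dropLast_concat, List.head?_reverse] at hy
      rw [List.Chain', List.isChain_append] at hω
      intro hzy
      exact hω.2.2 y hy z (by simp) hzy.symm
end

section
/- Let cs : CoxeterSystem M W be a dihedral Coxeter system, i.e., M : CoxeterMatrix (Fin 2) with m := M 0 1, and assume m is even (where m = 0 encodes the infinite dihedral group). Then every reflection t ∈ W has a unique t-prefix: there exists a unique p ∈ W such that ℓ(p) + ℓ(p⁻¹ * t) = ℓ(t) and 2·ℓ(p) = ℓ(t) + 1. -/
open CoxeterSystem List

section Aux

variable {W : Type*} [Group W] {M : CoxeterMatrix (Fin 2)} (cs : CoxeterSystem M W)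

local prefix:100 "s" => cs.simple
local prefix:100 "π" => cs.wordProd
local prefix:100 "ℓ" => cs.length

private lemma dihedral_r_pow {n : ℕ} (c : ZMod n) (N : ℕ) :
    (DihedralGroup.r c) ^ N = DihedralGroup.r ((N : ZMod n) * c) := by
  induction N with
  | zero => rw [pow_zero, Nat.cast_zero, zero_mul, DihedralGroup.one_def]
  | succ N ih =>
    rw [pow_succ, ih, DihedralGroup.r_mul_r]
    push_cast
    ring_nf

private lemma reduced_eq_alternating : ∀ (w : List (Fin 2)), cs.IsReduced w →
    ∃ i i' : Fin 2, i ≠ i' ∧ w = alternatingWord i i' w.length := by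
  intro w
  induction w with
  | nil => exact fun _ => ⟨0, 1, by decide, rfl⟩
  | cons c w ih =>
    intro hred
    have hred' : ℓ (π (c :: w)) = w.length + 1 := by simpa using hred.eq
    have h2 : ℓ (π w) ≤ w.length := cs.length_wordProd_le w
    have hredw : cs.IsReduced w := by
      have h4 := cs.length_mul_le (s c) (π w)
      rw [cs.length_simple, ← cs.wordProd_cons, hred'] at h4
      show ℓ (π w) = w.length
      omega
    obtain ⟨i, i', hne, hw⟩ := ih hredw
    cases hwl : w.length with
    | zero =>
      have : w = [] := List.length_eq_zero_iff.mp hwl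
      subst this
      exact ⟨1 - c, c, by fin_cases c <;> decide, rfl⟩
    | succ n =>
      rw [hwl] at hw
      rw [alternatingWord_succ'] at hw
      have hch : c ≠ (if Even n then i' else i) := by
        intro h'
        have hpp : π (c :: w) = π (alternatingWord i i' n) := by
          rw [hw, ← h', cs.wordProd_cons, cs.wordProd_cons,
            cs.simple_mul_simple_cancel_left]
        have hle : ℓ (π (c :: w)) ≤ n := by
          rw [hpp]
          calc ℓ (π (alternatingWord i i' n)) ≤ (alternatingWord i i' n).length :=
                cs.length_wordProd_le _
            _ = n := length_alternatingWord i i' n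
        omega
      have hc : c = (if Even (n + 1) then i' else i) := by
        by_cases hn : Even n
        · rw [if_neg (by simp [Nat.even_add_one, hn])]
          rw [if_pos hn] at hch
          revert hne hch
          fin_cases c <;> fin_cases i <;> fin_cases i' <;> decide
        · rw [if_pos (Nat.even_add_one.mpr hn)]
          rw [if_neg hn] at hch
          revert hne hch
          fin_cases c <;> fin_cases i <;> fin_cases i' <;> decide
      refine ⟨i, i', hne, ?_⟩
      have : (c :: w).length = (n + 1) + 1 := by simp [hwl]
      rw [this, alternatingWord_succ' i i' (n + 1), ← hc, alternatingWord_succ' i i' n, ← hw]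

private lemma pow_eq_one_of_two_words (i i' : Fin 2) {N k : ℕ} (hN : N = 2 * k + 1) {t : W}
    (htt : t * t = 1)
    (h1 : t = π (alternatingWord i i' N)) (h2 : t = π (alternatingWord i' i N)) :
    (s i' * s i) ^ N = 1 := by
  have hodd : ¬ Even N := by rw [hN]; exact fun ⟨r, hr⟩ => by omega
  have hdiv : N / 2 = k := by omega
  have e1 : t = s i' * (s i * s i') ^ k := by
    rw [h1, cs.prod_alternatingWord_eq_mul_pow, if_neg hodd, hdiv]
  have e2 : t = s i * (s i' * s i) ^ k := by
    rw [h2, cs.prod_alternatingWord_eq_mul_pow, if_neg hodd, hdiv]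
  have sc : SemiconjBy (s i) (s i' * s i) (s i * s i') := (mul_assoc _ _ _).symm
  have sck := (sc.pow_right k).eq
  calc (s i' * s i) ^ N = (s i' * s i) ^ (1 + k + k) := by
        rw [hN, show 2 * k + 1 = 1 + k + k from by omega]
    _ = (s i' * s i) * ((s i' * s i) ^ k * (s i' * s i) ^ k) := by
        rw [pow_add, pow_add, pow_one, mul_assoc]
    _ = s i' * ((s i * (s i' * s i) ^ k) * (s i' * s i) ^ k) := by
        simp only [mul_assoc]
    _ = s i' * (((s i * s i') ^ k * s i) * (s i' * s i) ^ k) := by rw [sck]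
    _ = (s i' * (s i * s i') ^ k) * (s i * (s i' * s i) ^ k) := by
        simp only [mul_assoc]
    _ = t * t := by rw [← e1, ← e2]
    _ = 1 := htt

private lemma even_of_pow_eq_one (hm : Even (M 0 1)) {N : ℕ} (i i' : Fin 2) (hne : i ≠ i')
    (h : (s i' * s i) ^ N = 1) : Even N := by
  set m := M 0 1 with hm01
  classical
  let f : Fin 2 → DihedralGroup m := fun j => DihedralGroup.sr (j.val : ZMod m)
  have hf : M.IsLiftable f := by
    intro j j'
    by_cases hjj : j = j'
    · subst hjj
      rw [M.diagonal, pow_one]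
      exact DihedralGroup.sr_mul_self _
    · have hMjj : M j j' = m := by
        rw [hm01]
        fin_cases j <;> fin_cases j' <;> simp_all [M.symmetric 1 0]
      show (DihedralGroup.sr _ * DihedralGroup.sr _) ^ M j j' = 1
      rw [hMjj, DihedralGroup.sr_mul_sr, dihedral_r_pow, DihedralGroup.one_def,
        ZMod.natCast_self, zero_mul]
  set φ := cs.lift ⟨f, hf⟩ with hφ
  have hval := congrArg φ h
  rw [map_pow, map_mul, map_one, hφ, cs.lift_apply_simple, cs.lift_apply_simple] at hval
  have hval' : (DihedralGroup.r (((i.val : ZMod m) - (i'.val : ZMod m)))) ^ N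
      = (1 : DihedralGroup m) := by
    rw [← DihedralGroup.sr_mul_sr]
    exact hval
  rw [dihedral_r_pow, DihedralGroup.one_def, DihedralGroup.r.injEq] at hval'
  have hN0 : (N : ZMod m) = 0 := by
    fin_cases i <;> fin_cases i' <;>
      simp_all [zero_sub, sub_zero, mul_neg, mul_one, neg_eq_zero]
  have hdvd : m ∣ N := (CharP.cast_eq_zero_iff (ZMod m) m N).mp hN0
  exact (even_iff_two_dvd).mpr (dvd_trans (even_iff_two_dvd.mp hm) hdvd)

end Aux

/-- In a dihedral Coxeter system with even (or infinite)
off-diagonal entry, every reflection has a unique reflection-prefix. -/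
theorem stmt_15 {W : Type*} [Group W] (M : CoxeterMatrix (Fin 2))
    (hm : Even (M 0 1)) (cs : CoxeterSystem M W)
    (t : W) (ht : cs.IsReflection t) :
    ∃! p : W, cs.length p + cs.length (p⁻¹ * t) = cs.length t ∧
      2 * cs.length p = cs.length t + 1 := by
  obtain ⟨k, hk⟩ := ht.odd_length
  -- Key: any candidate p comes from the (k+1)-prefix of an alternating reduced word for t.
  have key : ∀ p : W,
      (cs.length p + cs.length (p⁻¹ * t) = cs.length t ∧ 2 * cs.length p = cs.length t + 1) →
      ∃ i i' : Fin 2, i ≠ i' ∧ t = cs.wordProd (alternatingWord i i' (cs.length t)) ∧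
        p = cs.wordProd ((alternatingWord i i' (cs.length t)).take (k + 1)) := by
    rintro p ⟨h1, h2⟩
    have hlp : cs.length p = k + 1 := by omega
    have hlq : cs.length (p⁻¹ * t) = k := by omega
    obtain ⟨u, hulen, hup⟩ := cs.exists_reduced_word p
    obtain ⟨v, hvlen, hvq⟩ := cs.exists_reduced_word (p⁻¹ * t)
    have hprod : cs.wordProd (u ++ v) = t := by
      rw [cs.wordProd_append, ← hup, ← hvq, mul_inv_cancel_left]
    have hlen : (u ++ v).length = cs.length t := by
      rw [List.length_append, ← hulen.eq, ← hup, ← hvlen.eq, ← hvq, hlp, hlq, hk]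
      omega
    have hred : cs.IsReduced (u ++ v) := by
      show cs.length (cs.wordProd (u ++ v)) = _
      rw [hprod, hlen]
    obtain ⟨i, i', hne, halt⟩ := reduced_eq_alternating cs (u ++ v) hred
    rw [hlen] at halt
    refine ⟨i, i', hne, by rw [← halt]; exact hprod.symm, ?_⟩
    have hu : u = ((alternatingWord i i' (cs.length t)).take (k + 1)) := by
      rw [← halt, List.take_left' (by rw [← hulen.eq, ← hup, hlp])]
    rw [hup, hu]
  -- Existence
  obtain ⟨ω, hωlen, hωt⟩ := cs.exists_reduced_word t
  set p₀ := cs.wordProd (ω.take (k + 1)) with hp₀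
  have hsplit : p₀ * cs.wordProd (ω.drop (k + 1)) = t := by
    rw [hp₀, ← cs.wordProd_append, List.take_append_drop, hωt]
  have hq : p₀⁻¹ * t = cs.wordProd (ω.drop (k + 1)) := by
    rw [← hsplit, inv_mul_cancel_left]
  have hp1 : cs.length p₀ ≤ k + 1 := by
    refine (cs.length_wordProd_le _).trans ?_
    rw [List.length_take]
    omega
  have hq1 : cs.length (p₀⁻¹ * t) ≤ k := by
    rw [hq]
    refine (cs.length_wordProd_le _).trans ?_
    rw [List.length_drop, ← hωlen.eq, ← hωt, hk]
    omega
  have hsum : cs.length t ≤ cs.length p₀ + cs.length (p₀⁻¹ * t) := by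
    have := cs.length_mul_le p₀ (p₀⁻¹ * t)
    rwa [mul_inv_cancel_left] at this
  have hprop : cs.length p₀ + cs.length (p₀⁻¹ * t) = cs.length t ∧
      2 * cs.length p₀ = cs.length t + 1 := by omega
  refine ⟨p₀, hprop, ?_⟩
  -- Uniqueness
  rintro q hqprop
  obtain ⟨i, i', hne, hti, hqi⟩ := key q hqprop
  obtain ⟨j, j', hne', htj, hpj⟩ := key p₀ hprop
  have hcases : (i = j ∧ i' = j') ∨ (i = j' ∧ i' = j) := by
    revert hne hne'
    fin_cases i <;> fin_cases i' <;> fin_cases j <;> fin_cases j' <;> decide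
  rcases hcases with ⟨rfl, rfl⟩ | ⟨rfl, rfl⟩
  · rw [hqi, hpj]
  · exfalso
    have hpow := pow_eq_one_of_two_words cs i i' hk ht.mul_self hti htj
    have heven := even_of_pow_eq_one cs hm i i' hne hpow
    obtain ⟨r, hr⟩ := heven
    omega
end

section
/- Let w ∈ W and let I ⊆ B be a set of indices such that every i ∈ I is a right descent of w (ℓ(w * sᵢ) < ℓ(w)). Let P := Subgroup.closure {sᵢ | i ∈ I} be the standard parabolic subgroup generated by the simple reflections indexed by I. Then P is finite, and there exists w₀ ∈ P such that: ℓ(v) ≤ ℓ(w₀) for every v ∈ P (w₀ is the longest element of P); ℓ(w) = ℓ(w * w₀⁻¹) + ℓ(w₀) (so w = (w * w₀⁻¹) * w₀ is a reduced product); and for every i ∈ I, i is not a right descent of w * w₀⁻¹ (i.e., w * w₀⁻¹ is a minimal coset representative for P). -/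
namespace Stmt16Aux

open List

open scoped Classical

variable {B : Type*} {W : Type*} [Group W] {M : CoxeterMatrix B} (cs : CoxeterSystem M W)

noncomputable local instance : DecidableEq W := Classical.decEq W

local prefix:100 "σ" => cs.simple
local prefix:100 "π" => cs.wordProd
local prefix:100 "ℓ" => cs.length

lemma zmod2_add_self (a : ZMod 2) : a + a = 0 := by
  rw [← two_mul, show (2 : ZMod 2) = 0 by decide, zero_mul]


lemma conj_eq_iff (a x y : W) : a * x * a⁻¹ = y ↔ x = a⁻¹ * y * a := by
  constructor
  · intro h; rw [← h]; group
  · intro h; rw [h]; group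

lemma conj_eq_iff₂ (a x y : W) : a⁻¹ * x * a = y ↔ x = a * y * a⁻¹ := by
  constructor
  · intro h; rw [← h]; group
  · intro h; rw [h]; group

lemma mul_inv_simple_pair (i j : B) : (σ i * σ j)⁻¹ = σ j * σ i := by
  rw [mul_inv_rev, cs.inv_simple, cs.inv_simple]

lemma conj_step (i j : B) (Y : W) :
    σ i * (σ j * Y * σ j) * σ i = (σ i * σ j) * Y * (σ i * σ j)⁻¹ := by
  rw [mul_inv_simple_pair]; group

lemma sjq (i j : B) (k : ℕ) :
    σ j * (σ i * σ j) ^ k = ((σ i * σ j)⁻¹) ^ k * σ j := by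
  induction k with
  | zero => simp
  | succ k ih =>
    rw [pow_succ, ← mul_assoc, ih, mul_assoc, show σ j * (σ i * σ j) = (σ i * σ j)⁻¹ * σ j by
      rw [mul_inv_simple_pair]; group, ← mul_assoc, ← pow_succ]

lemma helperA (i j : B) (k : ℕ) :
    ((σ i * σ j) ^ k)⁻¹ * σ j * (σ i * σ j) ^ k = ((σ i * σ j)⁻¹) ^ (2*k) * σ j := by
  rw [mul_assoc, sjq, ← mul_assoc, ← inv_pow, ← pow_add, ← two_mul]

lemma helperB (i j : B) (k : ℕ) :
    ((σ i * σ j) ^ k)⁻¹ * (σ j * σ i * σ j) * (σ i * σ j) ^ k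
      = ((σ i * σ j)⁻¹) ^ (2*k+1) * σ j := by
  have h1 : (σ j * σ i * σ j : W) = (σ i * σ j)⁻¹ * σ j := by
    rw [mul_inv_simple_pair]
  calc ((σ i * σ j) ^ k)⁻¹ * (σ j * σ i * σ j) * (σ i * σ j) ^ k
      = ((σ i * σ j) ^ k)⁻¹ * (σ i * σ j)⁻¹ * (σ j * (σ i * σ j) ^ k) := by
        rw [h1]; group
    _ = ((σ i * σ j)⁻¹) ^ k * (σ i * σ j)⁻¹ * (((σ i * σ j)⁻¹) ^ k * σ j) := by
        rw [sjq, inv_pow]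
    _ = ((σ i * σ j)⁻¹) ^ (2*k+1) * σ j := by
        rw [← pow_succ, ← mul_assoc, ← pow_add, show k + 1 + k = 2*k+1 by ring]

/-- underlying function of the parity permutation representation -/
noncomputable def nuFun (i : B) : W × ZMod 2 → W × ZMod 2 :=
  fun p => (σ i * p.1 * σ i, p.2 + if p.1 = σ i then 1 else 0)

lemma nuFun_invol (i : B) : Function.Involutive (nuFun cs i) := by
  intro p
  unfold nuFun
  have h2 : (σ i * p.1 * σ i = σ i) ↔ (p.1 = σ i) := by
    constructor
    · intro h
      have := congrArg (fun x => σ i * x * σ i) h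
      simpa [← mul_assoc] using this
    · intro h; rw [h]; simp
  refine Prod.ext ?_ ?_
  · show σ i * (σ i * p.1 * σ i) * σ i = p.1
    simp [← mul_assoc]
  · show p.2 + _ + _ = p.2
    simp only [h2]
    rcases em (p.1 = σ i) with h | h <;>
      simp [h, add_assoc, zmod2_add_self]

noncomputable def nu (i : B) : Equiv.Perm (W × ZMod 2) := (nuFun_invol cs i).toPerm

@[simp] lemma nu_apply (i : B) (p : W × ZMod 2) : nu cs i p = nuFun cs i p := rfl

@[simp] lemma nu_inv (i : B) : (nu cs i)⁻¹ = nu cs i := by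
  change (nu cs i).symm = nu cs i
  exact Function.Involutive.toPerm_symm _

/-- the increment function for `nu i * nu j` -/
noncomputable def cFun (i j : B) : W → ZMod 2 :=
  fun t => (if t = σ j then 1 else 0) + (if t = σ j * σ i * σ j then 1 else 0)

lemma nu_mul_nu_pow_apply (i j : B) (n : ℕ) (p : W × ZMod 2) :
    ((nu cs i * nu cs j) ^ n) p =
      ((σ i * σ j) ^ n * p.1 * ((σ i * σ j) ^ n)⁻¹,
        p.2 + ∑ k ∈ Finset.range n,
          cFun cs i j ((σ i * σ j) ^ k * p.1 * ((σ i * σ j) ^ k)⁻¹)) := by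
  induction n with
  | zero => simp
  | succ n ih =>
    rw [pow_succ', Equiv.Perm.mul_apply, ih, Equiv.Perm.mul_apply]
    simp only [nu_apply, nuFun]
    refine Prod.ext ?_ ?_
    · show σ i * (σ j * ((σ i * σ j) ^ n * p.1 * ((σ i * σ j) ^ n)⁻¹) * σ j) * σ i = _
      rw [conj_step, pow_succ', mul_inv_rev]
      simp [mul_assoc]
    · show p.2 + _ + _ + _ = p.2 + _
      rw [Finset.sum_range_succ]
      have h2 : (σ j * ((σ i * σ j) ^ n * p.1 * ((σ i * σ j) ^ n)⁻¹) * σ j = σ i)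
          ↔ ((σ i * σ j) ^ n * p.1 * ((σ i * σ j) ^ n)⁻¹ = σ j * σ i * σ j) := by
        rw [show (σ j * ((σ i * σ j) ^ n * p.1 * ((σ i * σ j) ^ n)⁻¹) * σ j : W)
          = σ j * ((σ i * σ j) ^ n * p.1 * ((σ i * σ j) ^ n)⁻¹) * (σ j)⁻¹ by
            rw [cs.inv_simple]]
        rw [conj_eq_iff]
        rw [cs.inv_simple]
      rw [show (if σ j * ((σ i * σ j) ^ n * p.1 * ((σ i * σ j) ^ n)⁻¹) * σ j = σ i
          then (1:ZMod 2) else 0)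
          = (if (σ i * σ j) ^ n * p.1 * ((σ i * σ j) ^ n)⁻¹ = σ j * σ i * σ j
          then (1:ZMod 2) else 0) by simp [h2]]
      show _ = p.2 + (_ + cFun cs i j ((σ i * σ j) ^ n * p.1 * ((σ i * σ j) ^ n)⁻¹))
      unfold cFun
      push_cast
      ring

lemma sj_mul_pow (i j : B) (k : ℕ) :
    σ j * (σ i * σ j) ^ k = ((σ i * σ j)⁻¹) ^ k * σ j := by
  induction k with
  | zero => simp
  | succ k ih =>
    rw [pow_succ, ← mul_assoc, ih]
    rw [show ((σ i * σ j)⁻¹) ^ k * σ j * (σ i * σ j)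
        = ((σ i * σ j)⁻¹) ^ k * (σ j * (σ i * σ j)) by group]
    rw [show σ j * (σ i * σ j) = (σ i * σ j)⁻¹ * σ j by
      simp [mul_inv_rev, ← mul_assoc]]
    rw [pow_succ]
    group

private lemma sum_pair_eq (m : ℕ) (h : ℕ → ZMod 2) :
    (∑ k ∈ Finset.range m, (h (2*k) + h (2*k+1))) = ∑ a ∈ Finset.range (2*m), h a := by
  induction m with
  | zero => simp
  | succ m ih =>
    rw [Finset.sum_range_succ, ih, show 2*(m+1) = (2*m+1)+1 by ring,
      Finset.sum_range_succ, Finset.sum_range_succ, add_assoc]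

private lemma sum_range_add' (m n : ℕ) (h : ℕ → ZMod 2) :
    (∑ a ∈ Finset.range (m+n), h a)
      = (∑ a ∈ Finset.range m, h a) + ∑ a ∈ Finset.range n, h (m + a) := by
  induction n with
  | zero => simp
  | succ n ih =>
    rw [show m + (n+1) = (m+n)+1 by ring, Finset.sum_range_succ, ih,
      Finset.sum_range_succ, add_assoc]

lemma nu_liftable : M.IsLiftable (nu cs) := by
  intro i j
  apply Equiv.ext
  intro p
  rw [nu_mul_nu_pow_apply]
  have hq : (σ i * σ j) ^ (M i j) = 1 := cs.simple_mul_simple_pow i j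
  have hr : ((σ i * σ j)⁻¹) ^ (M i j) = 1 := by rw [inv_pow, hq]; simp
  refine Prod.ext ?_ ?_
  · show (σ i * σ j) ^ (M i j) * p.1 * ((σ i * σ j) ^ (M i j))⁻¹ = p.1
    rw [hq]; simp
  · show p.2 + _ = p.2
    have key : ∀ k : ℕ, cFun cs i j ((σ i * σ j) ^ k * p.1 * ((σ i * σ j) ^ k)⁻¹)
        = (if p.1 = ((σ i * σ j)⁻¹) ^ (2*k) * σ j then (1:ZMod 2) else 0)
          + (if p.1 = ((σ i * σ j)⁻¹) ^ (2*k+1) * σ j then (1:ZMod 2) else 0) := by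
      intro k
      unfold cFun
      have e1 : ((σ i * σ j) ^ k * p.1 * ((σ i * σ j) ^ k)⁻¹ = σ j)
          ↔ (p.1 = ((σ i * σ j)⁻¹) ^ (2*k) * σ j) := by
        rw [conj_eq_iff, helperA]
      have e2 : ((σ i * σ j) ^ k * p.1 * ((σ i * σ j) ^ k)⁻¹ = σ j * σ i * σ j)
          ↔ (p.1 = ((σ i * σ j)⁻¹) ^ (2*k+1) * σ j) := by
        rw [conj_eq_iff, helperB]
      rw [if_congr e1 rfl rfl, if_congr e2 rfl rfl]
    have hsum : (∑ k ∈ Finset.range (M i j),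
          cFun cs i j ((σ i * σ j) ^ k * p.1 * ((σ i * σ j) ^ k)⁻¹))
        = ∑ a ∈ Finset.range (2 * (M i j)),
            (fun a => if p.1 = ((σ i * σ j)⁻¹) ^ a * σ j then (1:ZMod 2) else 0) a := by
      refine (Finset.sum_congr rfl fun k _ => key k).trans ?_
      exact sum_pair_eq (M i j)
        (fun a => if p.1 = ((σ i * σ j)⁻¹) ^ a * σ j then (1:ZMod 2) else 0)
    rw [hsum, show 2 * (M i j) = (M i j) + (M i j) by ring,
      sum_range_add' (M i j) (M i j)
        (fun a => if p.1 = ((σ i * σ j)⁻¹) ^ a * σ j then (1:ZMod 2) else 0)]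
    have hshift : (∑ a ∈ Finset.range (M i j),
          (fun a => if p.1 = ((σ i * σ j)⁻¹) ^ a * σ j then (1:ZMod 2) else 0) ((M i j) + a))
        = ∑ a ∈ Finset.range (M i j),
            (fun a => if p.1 = ((σ i * σ j)⁻¹) ^ a * σ j then (1:ZMod 2) else 0) a := by
      refine Finset.sum_congr rfl fun a _ => ?_
      simp only
      rw [pow_add, hr, one_mul]
    rw [hshift, zmod2_add_self, add_zero]

/-- the parity representation -/
noncomputable def phi : W →* Equiv.Perm (W × ZMod 2) := cs.lift ⟨nu cs, nu_liftable cs⟩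

@[simp] lemma phi_simple (i : B) : phi cs (σ i) = nu cs i :=
  cs.lift_apply_simple (nu_liftable cs) i

lemma phi_wordProd_inv_apply (ω : List B) (t : W) (ε : ZMod 2) :
    (phi cs (π ω))⁻¹ (t, ε) =
      ((π ω)⁻¹ * t * (π ω),
        ε + ((cs.rightInvSeq ω).count ((π ω)⁻¹ * t * (π ω)) : ZMod 2)) := by
  induction ω generalizing t ε with
  | nil => simp
  | cons i ω ih =>
    rw [cs.wordProd_cons, map_mul, mul_inv_rev, Equiv.Perm.mul_apply]
    have h1 : (phi cs (σ i))⁻¹ (t, ε) = (σ i * t * σ i, ε + if t = σ i then 1 else 0) := by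
      rw [phi_simple, nu_inv, nu_apply]; rfl
    rw [h1, ih]
    have hseq : cs.rightInvSeq (i :: ω) = ((π ω)⁻¹ * σ i * (π ω)) :: cs.rightInvSeq ω := rfl
    rw [hseq]
    have harg : (π ω)⁻¹ * (σ i * t * σ i) * (π ω)
        = (σ i * π ω)⁻¹ * t * (σ i * π ω) := by
      rw [mul_inv_rev, cs.inv_simple]; group
    have hval : (σ i * π ω) * ((π ω)⁻¹ * σ i * (π ω)) * (σ i * π ω)⁻¹ = σ i := by
      rw [mul_inv_rev, cs.inv_simple]
      simp [mul_assoc]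
    have hiff : ((σ i * π ω)⁻¹ * t * (σ i * π ω) = (π ω)⁻¹ * σ i * (π ω)) ↔ (t = σ i) := by
      rw [conj_eq_iff₂, hval]
    have hcnt : (((π ω)⁻¹ * σ i * (π ω)) :: cs.rightInvSeq ω).count
          ((σ i * π ω)⁻¹ * t * (σ i * π ω))
        = (cs.rightInvSeq ω).count ((σ i * π ω)⁻¹ * t * (σ i * π ω))
          + if t = σ i then 1 else 0 := by
      rcases em (t = σ i) with h | h
      · subst h
        have hc : (σ i * π ω)⁻¹ * σ i * (σ i * π ω) = (π ω)⁻¹ * σ i * (π ω) := by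
          rw [mul_inv_rev, cs.inv_simple]
          simp [mul_assoc]
        rw [hc, List.count_cons_self, if_pos rfl]
      · have hc : (σ i * π ω)⁻¹ * t * (σ i * π ω) ≠ (π ω)⁻¹ * σ i * (π ω) :=
          fun hcontra => h (hiff.mp hcontra)
        rw [List.count_cons_of_ne (Ne.symm hc), if_neg h, add_zero]
    rw [hcnt, ← harg]
    refine Prod.ext rfl ?_
    show (ε + (if t = σ i then (1:ZMod 2) else 0)) + _ = ε + _
    push_cast
    ring

lemma count_ris_cast_eq {ω ω' : List B} (h : π ω = π ω') (r : W) :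
    ((cs.rightInvSeq ω).count r : ZMod 2) = ((cs.rightInvSeq ω').count r : ZMod 2) := by
  have h1 := phi_wordProd_inv_apply cs ω ((π ω) * r * (π ω)⁻¹) 0
  have h2 := phi_wordProd_inv_apply cs ω' ((π ω) * r * (π ω)⁻¹) 0
  rw [← h] at h2
  rw [h1] at h2
  have harg : (π ω)⁻¹ * ((π ω) * r * (π ω)⁻¹) * (π ω) = r := by group
  rw [harg] at h2
  have := congrArg Prod.snd h2
  simpa using this

lemma mem_ris_of_isRightDescent {ω : List B} {i : B}
    (h : cs.IsRightDescent (π ω) i) : σ i ∈ cs.rightInvSeq ω := by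
  obtain ⟨β, hβred, hβ⟩ := cs.exists_reduced_word' ((π ω) * σ i)
  have hπ : π (β.concat i) = π ω := by
    rw [cs.wordProd_concat, ← hβ]
    simp
  have hcount0 : (cs.rightInvSeq β).count (σ i) = 0 := by
    rw [List.count_eq_zero]
    intro hmem
    obtain ⟨k, hk, hget⟩ := List.mem_iff_getElem.mp hmem
    have hk' : k < β.length := by simpa using hk
    have heq : π β * σ i = π (β.eraseIdx k) := by
      rw [← cs.wordProd_mul_getD_rightInvSeq]
      congr 1
      rw [← hget]
      exact (List.getD_eq_getElem _ 1 hk).symm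
    have hlen : ℓ (π β * σ i) ≤ β.length - 1 := by
      rw [heq]
      calc ℓ (π (β.eraseIdx k)) ≤ (β.eraseIdx k).length := cs.length_wordProd_le _
      _ = β.length - 1 := by
          have := List.length_eraseIdx_add_one hk'
          omega
    have hβlen : β.length = ℓ ((π ω) * σ i) := by rw [hβ]; exact hβred.symm
    have hww : π β * σ i = π ω := by rw [← hβ]; simp
    rw [hww, hβlen] at hlen
    have hdesc : ℓ ((π ω) * σ i) < ℓ (π ω) := h
    omega
  have hcount1 : ((cs.rightInvSeq (β.concat i)).count (σ i) : ZMod 2) = 1 := by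
    rw [cs.rightInvSeq_concat]
    rw [List.concat_eq_append, List.count_append]
    have hfix : (MulAut.conj (σ i)) (σ i) = σ i := by
      simp [MulAut.conj_apply]
    have hc := List.count_map_of_injective (cs.rightInvSeq β) (⇑(MulAut.conj (σ i)))
      (MulEquiv.injective _) (σ i)
    rw [hfix] at hc
    rw [hc, hcount0]
    simp
  have hcast := count_ris_cast_eq cs hπ (σ i)
  rw [hcount1] at hcast
  by_contra hnot
  rw [List.count_eq_zero.mpr hnot] at hcast
  exact (by decide : ¬((1:ZMod 2) = ((0:ℕ):ZMod 2))) hcast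

theorem right_exchange {ω : List B} {i : B}
    (h : cs.IsRightDescent (π ω) i) :
    ∃ k, ∃ _ : k < ω.length, π ω * σ i = π (ω.eraseIdx k) := by
  obtain ⟨k, hk, hget⟩ := List.mem_iff_getElem.mp (mem_ris_of_isRightDescent cs h)
  have hk' : k < ω.length := by simpa using hk
  refine ⟨k, hk', ?_⟩
  rw [← cs.wordProd_mul_getD_rightInvSeq]
  congr 1
  rw [← hget]
  exact (List.getD_eq_getElem _ 1 hk).symm

end Stmt16Aux
namespace Stmt16Aux

open List

variable {B : Type*} {W : Type*} [Group W] {M : CoxeterMatrix B} (cs : CoxeterSystem M W)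

local prefix:100 "σ" => cs.simple
local prefix:100 "π" => cs.wordProd
local prefix:100 "ℓ" => cs.length

variable (I : Set B)

lemma length_of_reduced {ω : List B} (h : cs.IsReduced ω) : ℓ (π ω) = ω.length := h

lemma reduced_of_length {ω : List B} (h : ℓ (π ω) = ω.length) : cs.IsReduced ω := h

lemma simple_mem_closure {i : B} (hi : i ∈ I) :
    σ i ∈ Subgroup.closure (cs.simple '' I) :=
  Subgroup.subset_closure ⟨i, hi, rfl⟩

lemma wordProd_mem {ω : List B} (hω : ∀ b ∈ ω, b ∈ I) :
    π ω ∈ Subgroup.closure (cs.simple '' I) := by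
  induction ω with
  | nil => rw [cs.wordProd_nil]; exact Subgroup.one_mem _
  | cons i ω ih =>
    rw [cs.wordProd_cons]
    exact Subgroup.mul_mem _ (simple_mem_closure cs I (hω i (by simp)))
      (ih fun b hb => hω b (by simp [hb]))

lemma exists_word_of_mem {v : W} (hv : v ∈ Subgroup.closure (cs.simple '' I)) :
    ∃ ω : List B, (∀ b ∈ ω, b ∈ I) ∧ π ω = v := by
  induction hv using Subgroup.closure_induction with
  | mem x hx =>
    obtain ⟨i, hi, rfl⟩ := hx
    exact ⟨[i], by simp [hi], by simp⟩
  | one => exact ⟨[], by simp, by simp⟩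
  | mul x y hx hy ihx ihy =>
    obtain ⟨ω₁, h1, rfl⟩ := ihx
    obtain ⟨ω₂, h2, rfl⟩ := ihy
    refine ⟨ω₁ ++ ω₂, ?_, by rw [cs.wordProd_append]⟩
    intro b hb
    rcases List.mem_append.mp hb with h | h
    exacts [h1 b h, h2 b h]
  | inv x hx ihx =>
    obtain ⟨ω, h1, rfl⟩ := ihx
    exact ⟨ω.reverse, fun b hb => h1 b (List.mem_reverse.mp hb), by simp⟩

lemma exists_reduced_word_of_mem {v : W} (hv : v ∈ Subgroup.closure (cs.simple '' I)) :
    ∃ ω : List B, cs.IsReduced ω ∧ (∀ b ∈ ω, b ∈ I) ∧ π ω = v := by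
  obtain ⟨ω, hmem, rfl⟩ := exists_word_of_mem cs I hv
  clear hv
  induction ω using List.reverseRecOn with
  | nil => exact ⟨[], reduced_of_length cs (by simp), by simp, rfl⟩
  | append_singleton ω i ih =>
    obtain ⟨ρ, hρred, hρmem, hρeq⟩ := ih fun b hb => hmem b (by simp [hb])
    have hiI : i ∈ I := hmem i (by simp)
    have hπ : π (ω ++ [i]) = π ρ * σ i := by
      rw [cs.wordProd_append, ← hρeq]; simp
    by_cases hdesc : cs.IsRightDescent (π ρ) i
    · obtain ⟨k, hk, heq⟩ := right_exchange cs hdesc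
      refine ⟨ρ.eraseIdx k, ?_, ?_, ?_⟩
      · refine reduced_of_length cs ?_
        have h1 : ℓ (π ρ * σ i) + 1 = ℓ (π ρ) := (cs.isRightDescent_iff).mp hdesc
        have h2 := List.length_eraseIdx_add_one hk
        have h3 : ℓ (π ρ) = ρ.length := length_of_reduced cs hρred
        have h4 : ℓ (π (ρ.eraseIdx k)) ≤ (ρ.eraseIdx k).length := cs.length_wordProd_le _
        rw [← heq] at h4 ⊢
        omega
      · intro b hb
        exact hρmem b (List.eraseIdx_subset hb)
      · rw [← heq, hπ]
    · refine ⟨ρ ++ [i], ?_, ?_, ?_⟩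
      · refine reduced_of_length cs ?_
        rw [cs.wordProd_append]
        have h1 : ℓ (π ρ * π [i]) = ℓ (π ρ) + 1 := by
          rw [cs.wordProd_singleton]
          exact (cs.not_isRightDescent_iff).mp hdesc
        rw [h1, length_of_reduced cs hρred]
        simp
      · intro b hb
        rcases List.mem_append.mp hb with h | h
        · exact hρmem b h
        · have : b = i := by simpa using h
          rwa [this]
      · rw [hπ, cs.wordProd_append, cs.wordProd_singleton, hρeq]

lemma exists_descent_of_ne_one {v : W} (hv : v ∈ Subgroup.closure (cs.simple '' I))
    (hne : v ≠ 1) : ∃ i ∈ I, cs.IsRightDescent v i := by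
  obtain ⟨ω, hred, hmem, hπ⟩ := exists_reduced_word_of_mem cs I hv
  have hωne : ω ≠ [] := by
    rintro rfl
    rw [cs.wordProd_nil] at hπ
    exact hne hπ.symm
  obtain ⟨ρ, j, rfl⟩ := (List.eq_nil_or_concat' ω).resolve_left hωne
  refine ⟨j, hmem j (by simp), ?_⟩
  show ℓ (v * σ j) < ℓ v
  have h1 : v * σ j = π ρ := by
    rw [← hπ, cs.wordProd_append]
    simp
  have h2 : ℓ v = ρ.length + 1 := by
    rw [← hπ]
    have h := length_of_reduced cs hred
    simpa using h
  rw [h1]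
  have := cs.length_wordProd_le ρ
  omega

lemma exists_reduced_word_concat {v : W} (hv : v ∈ Subgroup.closure (cs.simple '' I))
    {j : B} (hjI : j ∈ I) (hj : cs.IsRightDescent v j) :
    ∃ ρ : List B, cs.IsReduced (ρ ++ [j]) ∧ (∀ b ∈ ρ ++ [j], b ∈ I) ∧ π (ρ ++ [j]) = v := by
  have hvj : v * σ j ∈ Subgroup.closure (cs.simple '' I) :=
    Subgroup.mul_mem _ hv (simple_mem_closure cs I hjI)
  obtain ⟨ρ, hred, hmem, hπ⟩ := exists_reduced_word_of_mem cs I hvj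
  have heq : π (ρ ++ [j]) = v := by
    rw [cs.wordProd_append, hπ]
    simp
  refine ⟨ρ, ?_, ?_, heq⟩
  · refine reduced_of_length cs ?_
    rw [heq]
    have h1 : ℓ (v * σ j) + 1 = ℓ v := (cs.isRightDescent_iff).mp hj
    have h2 : ℓ (v * σ j) = ρ.length := by
      rw [← hπ]; exact length_of_reduced cs hred
    simp only [List.length_append, List.length_singleton]
    omega
  · intro b hb
    rcases List.mem_append.mp hb with h | h
    exacts [hmem b h, by rw [(by simpa using h : b = j)]; exact hjI]

lemma exists_min_rep (z : W) :
    ∃ u₀ ∈ Subgroup.closure (cs.simple '' I),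
      ∀ u ∈ Subgroup.closure (cs.simple '' I), ℓ (z * u₀) ≤ ℓ (z * u) := by
  have hne : {n | ∃ u ∈ Subgroup.closure (cs.simple '' I), ℓ (z * u) = n}.Nonempty :=
    ⟨ℓ (z * 1), 1, Subgroup.one_mem _, rfl⟩
  obtain ⟨u₀, hu₀, hlen⟩ := Nat.sInf_mem hne
  refine ⟨u₀, hu₀, fun u hu => ?_⟩
  rw [hlen]
  exact Nat.sInf_le ⟨u, hu, rfl⟩

theorem length_mul_eq_of_min {x : W}
    (hmin : ∀ u ∈ Subgroup.closure (cs.simple '' I), ℓ x ≤ ℓ (x * u)) :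
    ∀ u ∈ Subgroup.closure (cs.simple '' I), ℓ (x * u) = ℓ x + ℓ u := by
  suffices H : ∀ n, ∀ u ∈ Subgroup.closure (cs.simple '' I), ℓ u = n →
      ℓ (x * u) = ℓ x + ℓ u by
    intro u hu
    exact H (ℓ u) u hu rfl
  intro n
  induction n using Nat.strong_induction_on with
  | _ n ih =>
    intro u hu hn
    rcases eq_or_ne u 1 with rfl | hne
    · simp
    · obtain ⟨ρ, hred, hmem, hπ⟩ := exists_reduced_word_of_mem cs I hu
      have hρne : ρ ≠ [] := by
        rintro rfl
        rw [cs.wordProd_nil] at hπ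
        exact hne hπ.symm
      obtain ⟨ρ', j, rfl⟩ := (List.eq_nil_or_concat' ρ).resolve_left hρne
      have hjI : j ∈ I := hmem j (by simp)
      have hu'P : π ρ' ∈ Subgroup.closure (cs.simple '' I) :=
        wordProd_mem cs I fun b hb => hmem b (by simp [hb])
      have hρ'red : cs.IsReduced ρ' := by
        have := hred.take ρ'.length
        rwa [List.take_left] at this
      have hlu : ℓ u = ρ'.length + 1 := by
        rw [← hπ]
        have h := length_of_reduced cs hred
        simpa using h
      have hlu' : ℓ (π ρ') = ρ'.length := length_of_reduced cs hρ'red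
      have huu : u = π ρ' * σ j := by
        rw [← hπ, cs.wordProd_append]
        simp
      have hxu' : ℓ (x * π ρ') = ℓ x + ℓ (π ρ') := by
        refine ih ρ'.length (by omega) (π ρ') hu'P hlu'
      have hnotdesc : ¬ cs.IsRightDescent (x * π ρ') j := by
        intro hdesc
        obtain ⟨α, hαred, hαeq⟩ := cs.exists_reduced_word' x
        have hγ : π (α ++ ρ') = x * π ρ' := by
          rw [cs.wordProd_append, ← hαeq]
        have hγred : cs.IsReduced (α ++ ρ') := by
          refine reduced_of_length cs ?_
          rw [hγ, hxu']
          have h1 : ℓ x = α.length := by rw [hαeq]; exact length_of_reduced cs hαred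
          simp [h1, hlu']
        have hdesc' : cs.IsRightDescent (π (α ++ ρ')) j := by rwa [hγ]
        obtain ⟨k, hk, heq⟩ := right_exchange cs hdesc'
        rw [hγ] at heq
        have hxlen : ℓ x = α.length := by rw [hαeq]; exact length_of_reduced cs hαred
        rcases lt_or_ge k α.length with hkα | hkα
        · rw [List.eraseIdx_append_of_lt_length hkα] at heq
          rw [cs.wordProd_append] at heq
          have h1 : x * (π ρ' * σ j * (π ρ')⁻¹) = π (α.eraseIdx k) := by
            rw [show x * (π ρ' * σ j * (π ρ')⁻¹) = x * π ρ' * σ j * (π ρ')⁻¹ by group, heq]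
            group
          have hmemP : π ρ' * σ j * (π ρ')⁻¹ ∈ Subgroup.closure (cs.simple '' I) :=
            Subgroup.mul_mem _ (Subgroup.mul_mem _ hu'P (simple_mem_closure cs I hjI))
              (Subgroup.inv_mem _ hu'P)
          have h2 := hmin _ hmemP
          rw [h1] at h2
          have h3 : ℓ (π (α.eraseIdx k)) ≤ (α.eraseIdx k).length := cs.length_wordProd_le _
          have h4 := List.length_eraseIdx_add_one hkα
          omega
        · rw [List.eraseIdx_append_of_length_le hkα] at heq
          rw [cs.wordProd_append] at heq
          have h2 : π ρ' * σ j = π (ρ'.eraseIdx (k - α.length)) := by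
            have h := heq
            rw [← hαeq, mul_assoc] at h
            exact mul_left_cancel h
          have hkρ : k - α.length < ρ'.length := by
            simp only [List.length_append] at hk
            omega
          have h3 : ℓ (π (ρ'.eraseIdx (k - α.length))) ≤ (ρ'.eraseIdx (k - α.length)).length :=
            cs.length_wordProd_le _
          have h4 := List.length_eraseIdx_add_one hkρ
          rw [← h2, ← huu] at h3
          omega
      have hlast : ℓ (x * π ρ' * σ j) = ℓ (x * π ρ') + 1 :=
        (cs.not_isRightDescent_iff).mp hnotdesc
      have hval : ℓ (π ρ' * σ j) = ρ'.length + 1 := by rw [← huu, hlu]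
      rw [huu, ← mul_assoc, hlast, hxu', hlu', hval]
      omega

theorem length_mul_eq_of_noDescent {z : W}
    (h : ∀ i ∈ I, ¬ cs.IsRightDescent z i) :
    ∀ u ∈ Subgroup.closure (cs.simple '' I), ℓ (z * u) = ℓ z + ℓ u := by
  obtain ⟨u₀, hu₀P, hu₀⟩ := exists_min_rep cs I z
  have hL : ∀ u ∈ Subgroup.closure (cs.simple '' I), ℓ (z * u₀ * u) = ℓ (z * u₀) + ℓ u := by
    refine length_mul_eq_of_min cs I (fun u hu => ?_)
    have := hu₀ (u₀ * u) (Subgroup.mul_mem _ hu₀P hu)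
    rwa [← mul_assoc] at this
  have hu₀1 : u₀ = 1 := by
    by_contra hne
    have hne' : u₀⁻¹ ≠ 1 := by simpa using hne
    obtain ⟨j, hjI, hj⟩ := exists_descent_of_ne_one cs I (Subgroup.inv_mem _ hu₀P) hne'
    have e1 : ℓ (z * u₀ * u₀⁻¹) = ℓ (z * u₀) + ℓ u₀⁻¹ := hL u₀⁻¹ (Subgroup.inv_mem _ hu₀P)
    have e2 : ℓ (z * u₀ * (u₀⁻¹ * σ j)) = ℓ (z * u₀) + ℓ (u₀⁻¹ * σ j) :=
      hL _ (Subgroup.mul_mem _ (Subgroup.inv_mem _ hu₀P) (simple_mem_closure cs I hjI))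
    have e3 : z * u₀ * u₀⁻¹ = z := by group
    have e4 : z * u₀ * (u₀⁻¹ * σ j) = z * σ j := by group
    have e5 : ℓ (u₀⁻¹ * σ j) + 1 = ℓ u₀⁻¹ := (cs.isRightDescent_iff).mp hj
    rw [e3] at e1
    rw [e4] at e2
    have : cs.IsRightDescent z j := by
      show ℓ (z * σ j) < ℓ z
      omega
    exact h j hjI this
  subst hu₀1
  intro u hu
  have := hL u hu
  simpa using this

lemma exists_left_decomp (c : W) :
    ∃ d ∈ Subgroup.closure (cs.simple '' I), ∃ e : W,
      c⁻¹ = d * e ∧ (∀ p ∈ Subgroup.closure (cs.simple '' I), ℓ (p * e) = ℓ p + ℓ e) := by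
  obtain ⟨u₀, hu₀P, hu₀⟩ := exists_min_rep cs I c
  have hL : ∀ u ∈ Subgroup.closure (cs.simple '' I), ℓ (c * u₀ * u) = ℓ (c * u₀) + ℓ u := by
    refine length_mul_eq_of_min cs I (fun u hu => ?_)
    have := hu₀ (u₀ * u) (Subgroup.mul_mem _ hu₀P hu)
    rwa [← mul_assoc] at this
  refine ⟨u₀, hu₀P, (c * u₀)⁻¹, by group, ?_⟩
  intro p hp
  have h1 : ℓ (p * (c * u₀)⁻¹) = ℓ (c * u₀ * p⁻¹) := by
    rw [← cs.length_inv]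
    congr 1
    group
  rw [h1, hL p⁻¹ (Subgroup.inv_mem _ hp), cs.length_inv, cs.length_inv]
  omega

end Stmt16Aux
namespace Stmt16Aux

open List

variable {B : Type*} {W : Type*} [Group W] {M : CoxeterMatrix B} (cs : CoxeterSystem M W)

local prefix:100 "σ" => cs.simple
local prefix:100 "π" => cs.wordProd
local prefix:100 "ℓ" => cs.length

lemma chain_ne_of_reduced : ∀ {ω : List B}, cs.IsReduced ω → ω.Chain' (· ≠ ·) := by
  intro ω
  induction ω with
  | nil => intro _; simp [List.Chain']
  | cons a ω ih =>
    intro hred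
    cases ω with
    | nil => simp [List.Chain']
    | cons b ω' =>
      have htail : cs.IsReduced (b :: ω') := by
        have := hred.drop 1
        simpa using this
      refine List.isChain_cons_cons.mpr ⟨?_, ih htail⟩
      intro hab
      subst hab
      have h1 : π (a :: a :: ω') = π ω' := by
        rw [cs.wordProd_cons, cs.wordProd_cons]
        simp [← mul_assoc]
      have h2 := length_of_reduced cs hred
      rw [h1] at h2
      have h3 := cs.length_wordProd_le ω'
      simp at h2
      omega

lemma alt_get (ω : List B) : ∀ (i j : B), ω.Chain' (· ≠ ·) → (∀ b ∈ ω, b = i ∨ b = j) →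
    ω.head? = some j → ∀ k (hk : k < ω.length), ω.get ⟨k, hk⟩ = if Even k then j else i := by
  induction ω with
  | nil => intro i j _ _ _ k hk; simp at hk
  | cons a ω ih =>
    intro i j hchain hmem hhead k hk
    have ha : a = j := by simpa using hhead
    cases k with
    | zero => simpa using ha
    | succ k =>
      cases ω with
      | nil => simp at hk
      | cons b ω' =>
        have hab : a ≠ b := (List.isChain_cons_cons.mp hchain).1
        have hb : b = i := by
          rcases hmem b (by simp) with h | h
          · exact h
          · exact absurd (ha.trans h.symm) hab
        have hrec := ih j i (List.isChain_cons_cons.mp hchain).2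
          (fun x hx => (hmem x (by simp [hx])).symm)
          (by simp [hb]) k (by simpa using hk)
        have hstep : (a :: b :: ω').get ⟨k+1, hk⟩ = (b :: ω').get ⟨k, by simpa using hk⟩ := rfl
        rw [hstep, hrec]
        rcases Nat.even_or_odd k with h | h
        · simp [h, Nat.even_add_one]
        · simp [Nat.not_even_iff_odd.mpr h, Nat.even_add_one]

lemma win_head {d : W} {x : B} (ω : List B) (hred : cs.IsReduced ω) (heq : π ω = d)
    (hhead : ω.head? = some x) : cs.IsLeftDescent d x := by
  cases ω with
  | nil => simp at hhead
  | cons a tail =>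
    have hax : a = x := by simpa using hhead
    subst hax
    have h1 : σ a * d = π tail := by
      rw [← heq, cs.wordProd_cons, ← mul_assoc]
      simp
    show ℓ (σ a * d) < ℓ d
    rw [h1, ← heq]
    have h2 := cs.length_wordProd_le tail
    have h3 := length_of_reduced cs hred
    simp at h3
    omega

lemma dihedral_left_descent {i j : B} (hij : i ≠ j) {d : W}
    (hd : d ∈ Subgroup.closure (cs.simple '' ({i, j} : Set B)))
    (hdi : cs.IsRightDescent d i) (hdj : cs.IsRightDescent d j) :
    cs.IsLeftDescent d i := by
  obtain ⟨ρA, hAred, hAmem, hAeq⟩ :=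
    exists_reduced_word_concat cs ({i, j} : Set B) hd (by simp) hdi
  obtain ⟨ρB, hBred, hBmem, hBeq⟩ :=
    exists_reduced_word_concat cs ({i, j} : Set B) hd (by simp) hdj
  -- analyze head of A
  have hAne : (ρA ++ [i]) ≠ [] := by simp
  have hBne : (ρB ++ [j]) ≠ [] := by simp
  obtain ⟨a, hA⟩ : ∃ a, (ρA ++ [i]).head? = some a := by
    cases hh : (ρA ++ [i]).head? with
    | none => exact absurd (List.head?_eq_none_iff.mp hh) hAne
    | some a => exact ⟨a, rfl⟩
  obtain ⟨b, hB⟩ : ∃ b, (ρB ++ [j]).head? = some b := by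
    cases hh : (ρB ++ [j]).head? with
    | none => exact absurd (List.head?_eq_none_iff.mp hh) hBne
    | some b => exact ⟨b, rfl⟩
  have haij : a = i ∨ a = j := by
    have : a ∈ ρA ++ [i] := List.mem_of_mem_head? hA
    simpa using hAmem a this
  have hbij : b = i ∨ b = j := by
    have : b ∈ ρB ++ [j] := List.mem_of_mem_head? hB
    simpa using hBmem b this
  rcases haij with ha | ha
  · exact win_head cs _ hAred hAeq (ha ▸ hA)
  rcases hbij with hb | hb
  · exact win_head cs _ hBred hBeq (hb ▸ hB)
  -- both heads are j : parity contradiction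
  exfalso
  rw [ha] at hA
  rw [hb] at hB
  have hAmem' : ∀ x ∈ ρA ++ [i], x = i ∨ x = j := by
    intro x hx; simpa using hAmem x hx
  have hBmem' : ∀ x ∈ ρB ++ [j], x = i ∨ x = j := by
    intro x hx; simpa using hBmem x hx
  have hAlen : ℓ d = (ρA ++ [i]).length := by rw [← hAeq]; exact length_of_reduced cs hAred
  have hBlen : ℓ d = (ρB ++ [j]).length := by rw [← hBeq]; exact length_of_reduced cs hBred
  have hAlen' : 0 < (ρA ++ [i]).length := by simp
  have hBlen' : 0 < (ρB ++ [j]).length := by simp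
  -- last element of A is i
  have hAget := alt_get (ρA ++ [i]) i j (chain_ne_of_reduced cs hAred) hAmem' hA
    ((ρA ++ [i]).length - 1) (by omega)
  have hBget := alt_get (ρB ++ [j]) i j (chain_ne_of_reduced cs hBred) hBmem' hB
    ((ρB ++ [j]).length - 1) (by omega)
  have hAlast : (ρA ++ [i]).get ⟨(ρA ++ [i]).length - 1, by omega⟩ = i := by
    rw [List.get_eq_getElem, ← List.getLast_eq_getElem hAne]
    exact List.getLast_append _
  have hBlast : (ρB ++ [j]).get ⟨(ρB ++ [j]).length - 1, by omega⟩ = j := by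
    rw [List.get_eq_getElem, ← List.getLast_eq_getElem hBne]
    exact List.getLast_append _
  rw [hAlast] at hAget
  rw [hBlast] at hBget
  -- from hAget : i = if Even (lenA - 1) then j else i  ⇒ ¬ Even (lenA - 1)
  have hA2 : ¬ Even ((ρA ++ [i]).length - 1) := by
    intro h
    rw [if_pos h] at hAget
    exact hij hAget
  have hB2 : Even ((ρB ++ [j]).length - 1) := by
    by_contra h
    rw [if_neg h] at hBget
    exact hij hBget.symm
  rw [← hAlen] at hA2
  rw [← hBlen] at hB2
  exact hA2 hB2

end Stmt16Aux
namespace Stmt16Aux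

open List

variable {B : Type*} {W : Type*} [Group W] {M : CoxeterMatrix B} (cs : CoxeterSystem M W)

local prefix:100 "σ" => cs.simple
local prefix:100 "π" => cs.wordProd
local prefix:100 "ℓ" => cs.length

lemma iff_of_not_iff_not {A C : Prop} (h : ¬ (A ↔ ¬ C)) : A ↔ C := by
  by_cases hA : A <;> by_cases hC : C
  · exact iff_of_true hA hC
  · exact absurd (iff_of_true hA hC) h
  · exact absurd (iff_of_false hA (not_not_intro hC)) h
  · exact iff_of_false hA hC

theorem nonfailure {w : W} {I : Set B} (hI : ∀ i ∈ I, cs.IsRightDescent w i) :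
    ∀ c ∈ Subgroup.closure (cs.simple '' I), ∀ i ∈ I,
      (cs.IsRightDescent (w * c) i ↔ ¬ cs.IsRightDescent c i) := by
  intro c₀ hc₀ i₀ hi₀
  by_contra hbad0
  have hfail0 : (cs.IsRightDescent (w * c₀) i₀ ↔ cs.IsRightDescent c₀ i₀) :=
    iff_of_not_iff_not hbad0
  set S : Set ℕ := {n | ∃ c, c ∈ Subgroup.closure (cs.simple '' I) ∧ ∃ i ∈ I,
    ℓ c = n ∧ (cs.IsRightDescent (w * c) i ↔ cs.IsRightDescent c i)} with hSdef
  have hSne : S.Nonempty := ⟨ℓ c₀, c₀, hc₀, i₀, hi₀, rfl, hfail0⟩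
  obtain ⟨c, hcP, i, hiI, hclen, hfail⟩ := Nat.sInf_mem hSne
  have hmin : ∀ c' ∈ Subgroup.closure (cs.simple '' I), ∀ i' ∈ I, ℓ c' < ℓ c →
      (cs.IsRightDescent (w * c') i' ↔ ¬ cs.IsRightDescent c' i') := by
    intro c' hc' i' hi' hlt
    by_contra h
    have hfail' : (cs.IsRightDescent (w * c') i' ↔ cs.IsRightDescent c' i') :=
      iff_of_not_iff_not h
    have hmem : ℓ c' ∈ S := ⟨c', hc', i', hi', rfl, hfail'⟩
    have := Nat.sInf_le hmem
    omega
  clear hbad0 hfail0 hSne hc₀ hi₀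
  have hasc : ¬ cs.IsRightDescent c i ∧ ¬ cs.IsRightDescent (w * c) i := by
    by_cases hd : cs.IsRightDescent c i
    · exfalso
      have hwd : cs.IsRightDescent (w * c) i := hfail.mpr hd
      have hcP' : c * σ i ∈ Subgroup.closure (cs.simple '' I) :=
        Subgroup.mul_mem _ hcP (simple_mem_closure cs I hiI)
      have hlt : ℓ (c * σ i) < ℓ c := hd
      have h1 : ¬ cs.IsRightDescent (c * σ i) i := by
        show ¬ ℓ (c * σ i * σ i) < ℓ (c * σ i)
        simp only [cs.simple_mul_simple_cancel_right]
        omega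
      have h2 : ¬ cs.IsRightDescent (w * c * σ i) i := by
        show ¬ ℓ (w * c * σ i * σ i) < ℓ (w * c * σ i)
        simp only [cs.simple_mul_simple_cancel_right]
        have : ℓ (w * c * σ i) < ℓ (w * c) := hwd
        omega
      have h3 := (hmin (c * σ i) hcP' i hiI hlt).mpr h1
      rw [← mul_assoc] at h3
      exact h2 h3
    · exact ⟨hd, fun hwd' => hd (hfail.mp hwd')⟩
  obtain ⟨hci, hwci⟩ := hasc
  have hcne : c ≠ 1 := by
    rintro rfl
    exact hwci (by simpa using hI i hiI)
  obtain ⟨j, hjI, hcj⟩ := exists_descent_of_ne_one cs I hcP hcne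
  have hij : i ≠ j := fun h => hci (h ▸ hcj)
  have hwcj : ¬ cs.IsRightDescent (w * c) j := by
    intro hwcj
    have hcP' : c * σ j ∈ Subgroup.closure (cs.simple '' I) :=
      Subgroup.mul_mem _ hcP (simple_mem_closure cs I hjI)
    have hlt : ℓ (c * σ j) < ℓ c := hcj
    have h1 : ¬ cs.IsRightDescent (c * σ j) j := by
      show ¬ ℓ (c * σ j * σ j) < ℓ (c * σ j)
      simp only [cs.simple_mul_simple_cancel_right]
      omega
    have h2 : ¬ cs.IsRightDescent (w * c * σ j) j := by
      show ¬ ℓ (w * c * σ j * σ j) < ℓ (w * c * σ j)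
      simp only [cs.simple_mul_simple_cancel_right]
      have : ℓ (w * c * σ j) < ℓ (w * c) := hwcj
      omega
    have h3 := (hmin (c * σ j) hcP' j hjI hlt).mpr h1
    rw [← mul_assoc] at h3
    exact h2 h3
  -- the dihedral pair
  have hJI : ({i, j} : Set B) ⊆ I := by
    intro x hx
    rcases hx with rfl | hx
    · exact hiI
    · rw [Set.mem_singleton_iff] at hx
      rw [hx]
      exact hjI
  have hQP : Subgroup.closure (cs.simple '' ({i, j} : Set B))
      ≤ Subgroup.closure (cs.simple '' I) :=
    Subgroup.closure_mono (Set.image_mono hJI)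
  obtain ⟨d, hdQ, e, hdec, he⟩ := exists_left_decomp cs ({i, j} : Set B) c
  have hsiQ : σ i ∈ Subgroup.closure (cs.simple '' ({i, j} : Set B)) :=
    simple_mem_closure cs _ (by simp)
  have hsjQ : σ j ∈ Subgroup.closure (cs.simple '' ({i, j} : Set B)) :=
    simple_mem_closure cs _ (by simp)
  have hlc : ℓ c = ℓ d + ℓ e := by
    have h1 := he d hdQ
    rw [← hdec, cs.length_inv] at h1
    exact h1
  have hljd : ℓ (σ j * d) + 1 = ℓ d := by
    have h1 := he (σ j * d) (Subgroup.mul_mem _ hsjQ hdQ)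
    have h2 : σ j * d * e = σ j * c⁻¹ := by rw [mul_assoc, ← hdec]
    rw [h2] at h1
    have h3 : ℓ (σ j * c⁻¹) = ℓ (c * σ j) := by
      rw [← cs.length_inv (c * σ j)]
      congr 1
      rw [mul_inv_rev, cs.inv_simple]
    have h4 : ℓ (c * σ j) + 1 = ℓ c := (cs.isRightDescent_iff).mp hcj
    omega
  have hlid : ℓ (σ i * d) = ℓ d + 1 := by
    have h1 := he (σ i * d) (Subgroup.mul_mem _ hsiQ hdQ)
    have h2 : σ i * d * e = σ i * c⁻¹ := by rw [mul_assoc, ← hdec]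
    rw [h2] at h1
    have h3 : ℓ (σ i * c⁻¹) = ℓ (c * σ i) := by
      rw [← cs.length_inv (c * σ i)]
      congr 1
      rw [mul_inv_rev, cs.inv_simple]
    have h4 : ℓ (c * σ i) = ℓ c + 1 := (cs.not_isRightDescent_iff).mp hci
    omega
  have hdne : 1 ≤ ℓ d := by
    by_contra h
    push_neg at h
    have : ℓ d = 0 := by omega
    have hd1 : d = 1 := (cs.length_eq_zero_iff).mp this
    rw [hd1] at hljd
    simp [cs.length_simple] at hljd
  have heinv : e⁻¹ = c * d := by
    have : e = d⁻¹ * c⁻¹ := by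
      rw [hdec]; group
    rw [this]; group
  have heinvP : e⁻¹ ∈ Subgroup.closure (cs.simple '' I) := by
    rw [heinv]
    exact Subgroup.mul_mem _ hcP (hQP hdQ)
  have hlte : ℓ e⁻¹ < ℓ c := by
    rw [cs.length_inv]
    omega
  have hwe : w * e⁻¹ = w * c * d := by rw [heinv]; group
  have hasc_e : ∀ i' ∈ ({i, j} : Set B), ¬ cs.IsRightDescent e⁻¹ i' := by
    intro i' hi'
    have hQ : σ i' ∈ Subgroup.closure (cs.simple '' ({i, j} : Set B)) :=
      simple_mem_closure cs _ hi'
    show ¬ ℓ (e⁻¹ * σ i') < ℓ e⁻¹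
    have h1 : ℓ (e⁻¹ * σ i') = ℓ (σ i' * e) := by
      rw [← cs.length_inv (e⁻¹ * σ i')]
      congr 1
      rw [mul_inv_rev, cs.inv_simple]
      simp
    have h2 := he (σ i') hQ
    rw [cs.length_simple] at h2
    rw [h1, h2, cs.length_inv]
    omega
  have hdesc_wcd : ∀ i' ∈ ({i, j} : Set B), cs.IsRightDescent (w * c * d) i' := by
    intro i' hi'
    have h := (hmin e⁻¹ heinvP i' (hJI hi') hlte).mpr (hasc_e i' hi')
    rwa [hwe] at h
  have hwcmin : ∀ u ∈ Subgroup.closure (cs.simple '' ({i, j} : Set B)),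
      ℓ (w * c * u) = ℓ (w * c) + ℓ u := by
    refine length_mul_eq_of_noDescent cs _ ?_
    intro i' hi'
    rcases hi' with rfl | hx
    · exact hwci
    · rw [Set.mem_singleton_iff] at hx
      rw [hx]
      exact hwcj
  have hdd : ∀ i' ∈ ({i, j} : Set B), cs.IsRightDescent d i' := by
    intro i' hi'
    have h1 : ℓ (w * c * d * σ i') < ℓ (w * c * d) := hdesc_wcd i' hi'
    have h2 := hwcmin d hdQ
    have h3 := hwcmin (d * σ i')
      (Subgroup.mul_mem _ hdQ (simple_mem_closure cs _ hi'))
    rw [← mul_assoc] at h3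
    show ℓ (d * σ i') < ℓ d
    omega
  have hfinal := dihedral_left_descent cs hij hdQ (hdd i (by simp)) (hdd j (by simp))
  have : ℓ (σ i * d) < ℓ d := hfinal
  omega

end Stmt16Aux
namespace Stmt16Aux

open List

variable {B : Type*} {W : Type*} [Group W] {M : CoxeterMatrix B} (cs : CoxeterSystem M W)

local prefix:100 "σ" => cs.simple
local prefix:100 "π" => cs.wordProd
local prefix:100 "ℓ" => cs.length

theorem length_mul_add_eq {w : W} {I : Set B} (hI : ∀ i ∈ I, cs.IsRightDescent w i) :
    ∀ v ∈ Subgroup.closure (cs.simple '' I), ℓ (w * v) + ℓ v = ℓ w := by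
  suffices H : ∀ n, ∀ v ∈ Subgroup.closure (cs.simple '' I), ℓ v = n →
      ℓ (w * v) + ℓ v = ℓ w by
    intro v hv
    exact H (ℓ v) v hv rfl
  intro n
  induction n using Nat.strong_induction_on with
  | _ n ih =>
    intro v hv hn
    rcases eq_or_ne v 1 with rfl | hne
    · simp
    · obtain ⟨ρ, hred, hmem, hπ⟩ := exists_reduced_word_of_mem cs I hv
      have hρne : ρ ≠ [] := by
        rintro rfl
        rw [cs.wordProd_nil] at hπ
        exact hne hπ.symm
      obtain ⟨ρ', j, rfl⟩ := (List.eq_nil_or_concat' ρ).resolve_left hρne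
      have hjI : j ∈ I := hmem j (by simp)
      have hv'P : π ρ' ∈ Subgroup.closure (cs.simple '' I) :=
        wordProd_mem cs I fun b hb => hmem b (by simp [hb])
      have hρ'red : cs.IsReduced ρ' := by
        have := hred.take ρ'.length
        rwa [List.take_left] at this
      have hlv : ℓ v = ρ'.length + 1 := by
        rw [← hπ]
        have h := length_of_reduced cs hred
        simpa using h
      have hlv' : ℓ (π ρ') = ρ'.length := length_of_reduced cs hρ'red
      have hvv : v = π ρ' * σ j := by
        rw [← hπ, cs.wordProd_append]
        simp
      have hih : ℓ (w * π ρ') + ℓ (π ρ') = ℓ w :=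
        ih ρ'.length (by omega) (π ρ') hv'P hlv'
      have hnd : ¬ cs.IsRightDescent (π ρ') j := by
        show ¬ ℓ (π ρ' * σ j) < ℓ (π ρ')
        rw [← hvv]
        omega
      have hd : cs.IsRightDescent (w * π ρ') j :=
        (nonfailure cs hI (π ρ') hv'P j hjI).mpr hnd
      have hd' : ℓ (w * π ρ' * σ j) + 1 = ℓ (w * π ρ') := (cs.isRightDescent_iff).mp hd
      have hc : ℓ (π ρ' * σ j) = ρ'.length + 1 := by rw [← hvv]; exact hlv
      rw [hvv, ← mul_assoc]
      omega

lemma lists_finite (S : Set W) (hS : S.Finite) :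
    ∀ n : ℕ, {l : List W | (∀ x ∈ l, x ∈ S) ∧ l.length ≤ n}.Finite := by
  intro n
  induction n with
  | zero =>
    refine Set.Finite.subset (Set.finite_singleton ([] : List W)) ?_
    rintro l ⟨-, hlen⟩
    simp only [Set.mem_singleton_iff]
    exact List.length_eq_zero_iff.mp (by omega)
  | succ n ih =>
    refine Set.Finite.subset
      (Set.Finite.insert ([] : List W)
        (Set.Finite.image (fun p : W × List W => p.1 :: p.2) (Set.Finite.prod hS ih))) ?_
    rintro l ⟨hmem, hlen⟩
    cases l with
    | nil => exact Set.mem_insert _ _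
    | cons a l' =>
      refine Set.mem_insert_of_mem _ ⟨(a, l'), ⟨hmem a (by simp), ?_, ?_⟩, rfl⟩
      · intro x hx
        exact hmem x (by simp [hx])
      · simpa using hlen

theorem main {w : W} {I : Set B} (hI : ∀ i ∈ I, cs.IsRightDescent w i) :
    ((Subgroup.closure (cs.simple '' I) : Set W)).Finite ∧
    ∃ w₀ ∈ Subgroup.closure (cs.simple '' I),
      (∀ v ∈ Subgroup.closure (cs.simple '' I), ℓ v ≤ ℓ w₀) ∧
      ℓ w = ℓ (w * w₀⁻¹) + ℓ w₀ ∧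
      ∀ i ∈ I, ¬ cs.IsRightDescent (w * w₀⁻¹) i := by
  have hS := length_mul_add_eq cs hI
  have hlenle : ∀ v ∈ Subgroup.closure (cs.simple '' I), ℓ v ≤ ℓ w := by
    intro v hv
    have := hS v hv
    omega
  -- finiteness
  obtain ⟨ω₀, hω₀red, hω₀⟩ := cs.exists_reduced_word' w
  have hsub : cs.simple '' I ⊆ {x | x ∈ cs.rightInvSeq ω₀} := by
    rintro x ⟨i, hi, rfl⟩
    have hdesc : cs.IsRightDescent (π ω₀) i := by
      rw [← hω₀]
      exact hI i hi
    exact mem_ris_of_isRightDescent cs hdesc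
  have hSfin : (cs.simple '' I).Finite :=
    Set.Finite.subset (List.finite_toSet _) hsub
  have hPsub : ((Subgroup.closure (cs.simple '' I) : Set W)) ⊆
      List.prod '' {l : List W | (∀ x ∈ l, x ∈ cs.simple '' I) ∧ l.length ≤ ℓ w} := by
    intro v hv
    rw [SetLike.mem_coe] at hv
    obtain ⟨ρ, hred, hmem, hπ⟩ := exists_reduced_word_of_mem cs I hv
    refine ⟨ρ.map cs.simple, ⟨?_, ?_⟩, ?_⟩
    · intro x hx
      obtain ⟨b, hb, rfl⟩ := List.mem_map.mp hx
      exact ⟨b, hmem b hb, rfl⟩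
    · rw [List.length_map]
      have h1 : ρ.length = ℓ v := by rw [← hπ]; exact (length_of_reduced cs hred).symm
      have h2 := hlenle v hv
      omega
    · rw [← hπ]
      rfl
  have hPfin : ((Subgroup.closure (cs.simple '' I) : Set W)).Finite :=
    Set.Finite.subset (Set.Finite.image _ (lists_finite _ hSfin (ℓ w))) hPsub
  refine ⟨hPfin, ?_⟩
  -- maximal element
  have hne : ((Subgroup.closure (cs.simple '' I) : Set W)).Nonempty :=
    ⟨1, by rw [SetLike.mem_coe]; exact Subgroup.one_mem _⟩
  obtain ⟨w₀, hw₀P, hmax⟩ := Set.Finite.exists_maximalFor cs.length _ hPfin hne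
  rw [SetLike.mem_coe] at hw₀P
  have hmax' : ∀ v ∈ Subgroup.closure (cs.simple '' I), ℓ v ≤ ℓ w₀ := by
    intro v hv
    by_contra h
    push_neg at h
    have := hmax (j := v) (by beta_reduce; rw [SetLike.mem_coe]; exact hv) (le_of_lt h)
    omega
  refine ⟨w₀, hw₀P, hmax', ?_, ?_⟩
  · have h1 := hS w₀⁻¹ (Subgroup.inv_mem _ hw₀P)
    rw [cs.length_inv] at h1
    omega
  · intro i hiI
    have h1 := hS (w₀⁻¹ * σ i)
      (Subgroup.mul_mem _ (Subgroup.inv_mem _ hw₀P) (simple_mem_closure cs I hiI))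
    have h2 := hS w₀⁻¹ (Subgroup.inv_mem _ hw₀P)
    have h3 : ℓ (w₀⁻¹ * σ i) ≤ ℓ w₀ := by
      have heq : ℓ (w₀⁻¹ * σ i) = ℓ (σ i * w₀) := by
        rw [← cs.length_inv (w₀⁻¹ * σ i)]
        congr 1
        rw [mul_inv_rev, cs.inv_simple]
        simp
      rw [heq]
      exact hmax' (σ i * w₀)
        (Subgroup.mul_mem _ (simple_mem_closure cs I hiI) hw₀P)
    show ¬ ℓ (w * w₀⁻¹ * σ i) < ℓ (w * w₀⁻¹)
    rw [mul_assoc]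
    rw [cs.length_inv] at h2
    omega

end Stmt16Aux

/-- If every `i ∈ I` is a right descent of `w`, then the
standard parabolic subgroup `P = ⟨sᵢ : i ∈ I⟩` is finite, it has a longest
element `w₀`, the product `w = (w * w₀⁻¹) * w₀` is reduced, and `w * w₀⁻¹`
has no right descent in `I`. -/
theorem stmt_16 {B : Type*} {W : Type*} [Group W] {M : CoxeterMatrix B}
    (cs : CoxeterSystem M W) (w : W) (I : Set B)
    (hI : ∀ i ∈ I, cs.IsRightDescent w i) :
    ((Subgroup.closure (cs.simple '' I) : Set W)).Finite ∧
    ∃ w₀ ∈ Subgroup.closure (cs.simple '' I),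
      (∀ v ∈ Subgroup.closure (cs.simple '' I), cs.length v ≤ cs.length w₀) ∧
      cs.length w = cs.length (w * w₀⁻¹) + cs.length w₀ ∧
      ∀ i ∈ I, ¬ cs.IsRightDescent (w * w₀⁻¹) i := by
  exact Stmt16Aux.main cs hI
end
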